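/- arXiv:1410.5211 — 14 statements merged into one kernel-verified Lean document; each statement's English description precedes it below -/
import Mathlib

section
/- Hua's theorem: Let D and D' be division rings and let γ : D → D' be a Jordan homomorphism. Then either γ(x*y) = γ(x)*γ(y) for all x, y ∈ D, or γ(x*y) = γ(y)*γ(x) for all x, y ∈ D; that is, γ is an injective ring homomorphism or an injective ring anti-homomorphism of D into D'. -/
/-- **Hua's theorem.** A Jordan homomorphism between division rings is an injective
ring homomorphism or an injective ring anti-homomorphism. -/
theorem hua_theorem {D D' : Type*} [DivisionRing D] [DivisionRing D'] (γ : D → D')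
    (hadd : ∀ x y : D, γ (x + y) = γ x + γ y)
    (hinj : Function.Injective γ)
    (hone : γ 1 = 1)
    (hjordan : ∀ x y : D, γ (x * y * x) = γ x * γ y * γ x) :
    (∀ x y : D, γ (x * y) = γ x * γ y) ∨ (∀ x y : D, γ (x * y) = γ y * γ x) := by
  -- γ preserves squares
  have hsq : ∀ x : D, γ (x * x) = γ x * γ x := by
    intro x
    have h := hjordan x 1
    simpa [hone] using h
  -- trilinear identity
  have htri : ∀ x y z : D,
      γ (x * y * z + z * y * x) = γ x * γ y * γ z + γ z * γ y * γ x := by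
    intro x y z
    have h := hjordan (x + z) y
    have hl : (x + z) * y * (x + z) = x * y * x + (x * y * z + z * y * x) + z * y * z := by
      noncomm_ring
    have hr : (γ x + γ z) * γ y * (γ x + γ z)
        = γ x * γ y * γ x + (γ x * γ y * γ z + γ z * γ y * γ x) + γ z * γ y * γ z := by
      noncomm_ring
    simp only [hl, hadd, hjordan] at h
    rw [hr] at h
    rw [hadd]
    exact add_left_cancel (add_right_cancel h)
  -- pointwise dichotomy
  have hpt : ∀ x y : D, γ (x * y) = γ x * γ y ∨ γ (x * y) = γ y * γ x := by
    intro x y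
    have h := htri x y (x * y)
    have e1 : x * y * (x * y) + x * y * y * x = x * y * (x * y) + x * (y * y) * x := by
      noncomm_ring
    rw [e1, hadd, hsq, hjordan, hsq] at h
    -- h : γ(xy)*γ(xy) + γx*(γy*γy)*γx = γx*γy*γ(xy) + γ(xy)*γy*γx
    have hz : (γ (x * y) - γ x * γ y) * (γ (x * y) - γ y * γ x) = 0 := by
      have hexp : (γ (x * y) - γ x * γ y) * (γ (x * y) - γ y * γ x)
          = (γ (x * y) * γ (x * y) + γ x * (γ y * γ y) * γ x)
            - (γ x * γ y * γ (x * y) + γ (x * y) * γ y * γ x) := by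
        noncomm_ring
      rw [hexp, h, sub_self]
    rcases mul_eq_zero.mp hz with h' | h'
    · exact Or.inl (sub_eq_zero.mp h')
    · exact Or.inr (sub_eq_zero.mp h')
  -- for each fixed x, one of the two options holds for all y
  have hfix : ∀ x : D, (∀ y : D, γ (x * y) = γ x * γ y) ∨ (∀ y : D, γ (x * y) = γ y * γ x) := by
    intro x
    by_contra hc
    push_neg at hc
    obtain ⟨⟨y, hy⟩, ⟨z, hz⟩⟩ := hc
    have hy' : γ (x * y) = γ y * γ x := (hpt x y).resolve_left hy
    have hz' : γ (x * z) = γ x * γ z := (hpt x z).resolve_right hz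
    have hs : γ (x * (y + z)) = γ y * γ x + γ x * γ z := by
      rw [mul_add, hadd, hy', hz']
    rcases hpt x (y + z) with h | h
    · have h1 : γ y * γ x + γ x * γ z = γ x * γ y + γ x * γ z := by
        rw [← hs, h, hadd, mul_add]
      exact hy (hy'.trans (add_right_cancel h1))
    · have h1 : γ y * γ x + γ x * γ z = γ y * γ x + γ z * γ x := by
        rw [← hs, h, hadd, add_mul]
      exact hz (hz'.trans (add_left_cancel h1))
  by_contra hc
  push_neg at hc
  obtain ⟨⟨x, y, hxy⟩, ⟨u, v, huv⟩⟩ := hc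
  have hx : ∀ w : D, γ (x * w) = γ w * γ x :=
    (hfix x).resolve_left (fun h => hxy (h y))
  have hu : ∀ w : D, γ (u * w) = γ u * γ w :=
    (hfix u).resolve_right (fun h => huv (h v))
  rcases hfix (x + u) with h | h
  · apply hxy
    have hcomm : γ x * γ y = γ y * γ x := by
      have h1 := h y
      rw [add_mul, hadd, hx, hu, hadd, add_mul] at h1
      exact (add_right_cancel h1).symm
    rw [hx y, hcomm]
  · apply huv
    have hcomm : γ u * γ v = γ v * γ u := by
      have h1 := h v
      rw [add_mul, hadd, hx, hu, hadd, mul_add] at h1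
      exact (add_left_cancel h1)
    rw [hu v, hcomm]
end

section
/- Let D be a division ring, K a field, and γ : D → K a Jordan homomorphism such that the subring of K generated by the image of γ equals K. Then γ is a ring isomorphism from D onto K; in particular D is commutative. -/
/-- A Jordan homomorphism from a division ring onto a field (whose image generates the
field as a subring) is a ring isomorphism; in particular the division ring is commutative. -/
theorem jordan_hom_into_field {D K : Type*} [DivisionRing D] [Field K] (γ : D → K)
    (hadd : ∀ x y : D, γ (x + y) = γ x + γ y)
    (hinj : Function.Injective γ)
    (hone : γ 1 = 1)
    (hjordan : ∀ x y : D, γ (x * y * x) = γ x * γ y * γ x)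
    (hgen : Subring.closure (Set.range γ) = ⊤) :
    (∃ e : D ≃+* K, ⇑e = γ) ∧ ∀ x y : D, x * y = y * x := by
  have hzero : γ 0 = 0 := by
    have h := hadd 0 0
    simp only [add_zero] at h
    linear_combination -h
  -- squares
  have hsq : ∀ x : D, γ (x * x) = γ x * γ x := by
    intro x
    have h := hjordan x 1
    simpa [hone] using h
  -- linearized Jordan identity
  have lin : ∀ u z v : D, γ (u * z * v + v * z * u)
      = γ u * γ z * γ v + γ v * γ z * γ u := by
    intro u z v
    have h := hjordan (u + v) z
    have e1 : (u + v) * z * (u + v) = u * z * u + (u * z * v + v * z * u) + v * z * v := by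
      noncomm_ring
    rw [e1, hadd (u * z * u + (u * z * v + v * z * u)) (v * z * v),
      hadd (u * z * u) (u * z * v + v * z * u), hjordan u z, hjordan v z,
      hadd u v] at h
    linear_combination h
  -- multiplicativity
  have hmul : ∀ x y : D, γ (x * y) = γ x * γ y := by
    have key : ∀ x y : D, γ (y * x) = γ x * γ y := by
      intro x y
      have h := lin y x (y * x)
      have e1 : y * x * (y * x) = (y * x) * (y * x) := by noncomm_ring
      have e2 : (y * x) * x * y = y * (x * x) * y := by noncomm_ring
      rw [hadd, e1, e2, hsq (y * x), hjordan y (x * x), hsq x] at h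
      have hsq0 : (γ (y * x) - γ x * γ y) ^ 2 = 0 := by ring_nf; linear_combination h
      have := pow_eq_zero_iff (n := 2) (by norm_num) |>.mp hsq0
      linear_combination this
    intro x y
    rw [key y x, mul_comm]
  -- build the ring hom
  let f : D →+* K :=
    { toFun := γ, map_one' := hone, map_mul' := hmul, map_zero' := hzero, map_add' := hadd }
  have hsurj : Function.Surjective γ := by
    intro k
    have hk : k ∈ Subring.closure (Set.range γ) := by rw [hgen]; exact Subring.mem_top k
    have hr : Set.range γ = (f.range : Set K) := by
      rw [RingHom.coe_range]; rfl
    rw [hr, Subring.closure_eq, RingHom.mem_range] at hk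
    exact hk
  refine ⟨⟨RingEquiv.ofBijective f ⟨hinj, hsurj⟩, rfl⟩, fun x y => hinj ?_⟩
  rw [hmul, hmul, mul_comm]
end

section
/- Let D and K be division rings, let σ be a ring anti-automorphism of K with σ ∘ σ = id, and let γ : D → K be a Jordan homomorphism with σ(γ(x)) = γ(x) for all x ∈ D. Then γ(x*y) = γ(x)*γ(y) for all x, y ∈ D, the elements of the image of γ pairwise commute (so the image is a commutative division subring of K), and D is commutative. -/
/-- A Jordan homomorphism into a division ring with involutive anti-automorphism `σ`,
whose image is fixed by `σ` pointwise, is multiplicative; its image is commutative, and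
the source division ring is commutative. -/
theorem jordan_hom_fixed_by_involution {D K : Type*} [DivisionRing D] [DivisionRing K]
    (σ : K → K)
    (hσadd : ∀ x y : K, σ (x + y) = σ x + σ y)
    (hσbij : Function.Bijective σ)
    (hσone : σ 1 = 1)
    (hσmul : ∀ x y : K, σ (x * y) = σ y * σ x)
    (hσinv : ∀ x : K, σ (σ x) = x)
    (γ : D → K)
    (hadd : ∀ x y : D, γ (x + y) = γ x + γ y)
    (hinj : Function.Injective γ)
    (hone : γ 1 = 1)
    (hjordan : ∀ x y : D, γ (x * y * x) = γ x * γ y * γ x)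
    (hfix : ∀ x : D, σ (γ x) = γ x) :
    (∀ x y : D, γ (x * y) = γ x * γ y) ∧ (∀ x y : D, γ x * γ y = γ y * γ x) ∧
      (∀ x y : D, x * y = y * x) := by
  have h0 : γ 0 = 0 := by
    have h := hadd 0 0
    simpa using h.symm
  have hne : ∀ {z : D}, z ≠ 0 → γ z ≠ 0 := by
    intro z hz h
    exact hz (hinj (h.trans h0.symm))
  -- polarized Jordan identity
  have hpol : ∀ x y : D, γ (x * y + y * x) = γ x * γ y + γ y * γ x := by
    intro x y
    have h := hjordan (x + 1) y
    have hx1 : γ (x + 1) = γ x + 1 := by rw [hadd, hone]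
    rw [hx1] at h
    have hL : (x + 1) * y * (x + 1) = x * y * x + (x * y + y * x) + y := by noncomm_ring
    rw [hL, hadd, hadd, hjordan] at h
    have hB : γ (x * y + y * x)
        = (γ x + 1) * γ y * (γ x + 1) - γ x * γ y * γ x - γ y := by
      rw [← h]; abel
    rw [hB]; noncomm_ring
  -- γ preserves inverses
  have hinv : ∀ {y : D}, y ≠ 0 → γ y⁻¹ = (γ y)⁻¹ := by
    intro y hy
    have h := hjordan y y⁻¹
    rw [mul_inv_cancel₀ hy, one_mul] at h
    have hb : γ y ≠ 0 := hne hy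
    have h1 : γ y * (γ y⁻¹ * γ y) = γ y * 1 := by
      rw [mul_one, ← mul_assoc]; exact h.symm
    have h2 : γ y⁻¹ * γ y = 1 := mul_left_cancel₀ hb h1
    calc γ y⁻¹ = γ y⁻¹ * (γ y * (γ y)⁻¹) := by rw [mul_inv_cancel₀ hb, mul_one]
      _ = (γ y⁻¹ * γ y) * (γ y)⁻¹ := by rw [mul_assoc]
      _ = (γ y)⁻¹ := by rw [h2, one_mul]
  -- multiplicativity
  have hmul : ∀ x y : D, γ (x * y) = γ x * γ y := by
    intro x y
    by_cases hy : y = 0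
    · simp [hy, h0]
    have hbne : γ y ≠ 0 := hne hy
    -- γ (x*x*y) = a*c + c*a - a*b*a
    have hxxy : γ (x * x * y)
        = γ x * γ (x * y) + γ (x * y) * γ x - γ x * γ y * γ x := by
      have h := hpol x (x * y)
      have hL : x * (x * y) + (x * y) * x = x * x * y + x * y * x := by noncomm_ring
      rw [hL, hadd, hjordan] at h
      linear_combination (norm := abel) h
    -- Jordan identity applied to (x*y, y⁻¹)
    have hkey : γ (x * y) * (γ y)⁻¹ * γ (x * y)
        = γ x * γ (x * y) + γ (x * y) * γ x - γ x * γ y * γ x := by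
      have h := hjordan (x * y) y⁻¹
      have hL : x * y * y⁻¹ * (x * y) = x * x * y := by
        rw [mul_assoc x y y⁻¹, mul_inv_cancel₀ hy, mul_one, ← mul_assoc]
      rw [hL, hinv hy, hxxy] at h
      exact h.symm
    -- factorization
    have hbi : γ y * (γ y)⁻¹ = 1 := mul_inv_cancel₀ hbne
    have hfac : (γ (x * y) - γ x * γ y) * ((γ y)⁻¹ * γ (x * y) - γ x) = 0 := by
      have e1 : (γ (x * y) - γ x * γ y) * ((γ y)⁻¹ * γ (x * y) - γ x)
          = γ (x * y) * (γ y)⁻¹ * γ (x * y) - γ (x * y) * γ x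
            - γ x * (γ y * (γ y)⁻¹) * γ (x * y) + γ x * γ y * γ x := by noncomm_ring
      rw [hbi, hkey] at e1
      rw [e1]; noncomm_ring
    rcases mul_eq_zero.1 hfac with h1 | h2
    · exact sub_eq_zero.1 h1
    · -- (γ y)⁻¹ * γ (x*y) = γ x, so γ (x*y) = γ y * γ x, and σ-fixedness finishes
      have hba : γ (x * y) = γ y * γ x := by
        have h3 : (γ y)⁻¹ * γ (x * y) = γ x := sub_eq_zero.1 h2
        calc γ (x * y) = (γ y * (γ y)⁻¹) * γ (x * y) := by rw [hbi, one_mul]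
          _ = γ y * ((γ y)⁻¹ * γ (x * y)) := by rw [mul_assoc]
          _ = γ y * γ x := by rw [h3]
      have h4 : σ (γ (x * y)) = γ (x * y) := hfix (x * y)
      have h5 : σ (γ y * γ x) = γ x * γ y := by rw [hσmul, hfix, hfix]
      rw [hba, h5] at h4
      rw [hba, ← h4]
  have hcomm : ∀ x y : D, γ x * γ y = γ y * γ x := by
    intro x y
    have h1 : σ (γ x * γ y) = γ x * γ y := by rw [← hmul]; exact hfix _
    have h2 : σ (γ x * γ y) = γ y * γ x := by rw [hσmul, hfix, hfix]
    rw [← h1, h2]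
  refine ⟨hmul, hcomm, fun x y => ?_⟩
  apply hinj
  rw [hmul, hmul, hcomm]
end

section
/- Let F be a field, D a division ring, and γ : F → D a Jordan homomorphism. Then γ(x*y) = γ(x)*γ(y) for all x, y ∈ F; hence γ is an injective ring homomorphism and its image is a commutative division subring (a subfield) of D. -/
/-- Key algebraic lemma in a division ring: if `u + u = c + d`, `u * u = c * d`, and
`u * u + u * u = c * u + u * d`, then `u = c` and `c = d`. -/
theorem jordan_key {D : Type*} [DivisionRing D] (u c d : D)
    (h1 : u + u = c + d) (h2 : u * u = c * d)
    (h3 : u * u + u * u = c * u + u * d) : u = c ∧ c = d := by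
  -- first: d * c = c * d
  have hA : (u + u) * (u + u) = (c + d) * (c + d) := by rw [h1]
  have hB : (u + u) * (u + u) = c * (c + d) + (c + d) * d := by
    have e1 : (u + u) * (u + u) = (u * u + u * u) + (u * u + u * u) := by noncomm_ring
    rw [e1, h3]
    have e2 : (c * u + u * d) + (c * u + u * d) = c * (u + u) + (u + u) * d := by noncomm_ring
    rw [e2, h1]
  have hdc : d * c = c * d := by
    have h := hA.symm.trans hB
    have e : d * c - c * d = (c + d) * (c + d) - (c * (c + d) + (c + d) * d) := by noncomm_ring
    rw [h, sub_self] at e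
    exact sub_eq_zero.mp e
  -- second: c = d
  have hsq0 : (c - d) * (c - d) = 0 := by
    have e : (c - d) * (c - d) = (c + d) * (c + d) - (c * d + c * d + (d * c + d * c)) := by
      noncomm_ring
    rw [hdc, ← h1, ← h2] at e
    rw [e]; noncomm_ring
  have hcd : c = d := sub_eq_zero.mp (mul_self_eq_zero.mp hsq0)
  refine ⟨?_, hcd⟩
  -- finally: u = c
  by_cases ht : (2 : D) = 0
  · -- characteristic two case
    have hcc : c + c = 0 := by
      have : (2 : D) * c = c + c := two_mul c
      rw [ht, zero_mul] at this; exact this.symm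
    have huu : u + u = 0 := by rw [h1, ← hcd]; exact hcc
    have hcu : c * u + u * c = 0 := by
      have e : u * u + u * u = (u + u) * u := by noncomm_ring
      rw [huu, zero_mul] at e
      rw [← hcd] at h3
      rw [← h3]; exact e
    have hsqu : (u - c) * (u - c) = 0 := by
      have e : (u - c) * (u - c) = u * u + c * c - (c * u + u * c) := by noncomm_ring
      rw [hcu, sub_zero, h2, ← hcd] at e
      rw [e]
      have e2 : c * c + c * c = (c + c) * c := by noncomm_ring
      rw [e2, hcc, zero_mul]
    exact sub_eq_zero.mp (mul_self_eq_zero.mp hsqu)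
  · have h2u : (2 : D) * u = (2 : D) * c := by
      rw [two_mul, two_mul, h1, ← hcd]
    exact mul_left_cancel₀ ht h2u

/-- A Jordan homomorphism from a field into a division ring is multiplicative; hence it
is an injective ring homomorphism and its image is a commutative division subring. -/
theorem jordan_hom_from_field {F D : Type*} [Field F] [DivisionRing D] (γ : F → D)
    (hadd : ∀ x y : F, γ (x + y) = γ x + γ y)
    (hinj : Function.Injective γ)
    (hone : γ 1 = 1)
    (hjordan : ∀ x y : F, γ (x * y * x) = γ x * γ y * γ x) :
    (∀ x y : F, γ (x * y) = γ x * γ y) ∧ ∀ x y : F, γ x * γ y = γ y * γ x := by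
  -- squares are preserved
  have hsq : ∀ z : F, γ (z * z) = γ z * γ z := by
    intro z
    have := hjordan z 1
    simpa [hone] using this
  -- linearized square identity
  have h1 : ∀ x y : F, γ (x * y) + γ (x * y) = γ x * γ y + γ y * γ x := by
    intro x y
    have e : (x + y) * (x + y) = x * x + (x * y + (x * y + y * y)) := by ring
    have h : γ x * γ x + (γ (x * y) + (γ (x * y) + γ y * γ y))
        = (γ x + γ y) * (γ x + γ y) := by
      rw [← hsq x, ← hsq y, ← hadd, ← hadd, ← hadd, ← e, ← hadd, hsq]
    have e2 : γ (x * y) + γ (x * y)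
        = (γ x + γ y) * (γ x + γ y) - γ x * γ x - γ y * γ y := by
      rw [← h]; abel
    rw [e2]; noncomm_ring
  -- linearized Jordan identity
  have hlin : ∀ x z y : F, γ (x * y * z) + γ (z * y * x)
      = γ x * γ y * γ z + γ z * γ y * γ x := by
    intro x z y
    have e : (x + z) * y * (x + z) = x * y * x + (x * y * z + (z * y * x + z * y * z)) := by
      ring
    have h : γ x * γ y * γ x + (γ (x * y * z) + (γ (z * y * x) + γ z * γ y * γ z))
        = (γ x + γ z) * γ y * (γ x + γ z) := by
      rw [← hjordan x y, ← hjordan z y, ← hadd, ← hadd, ← hadd, ← e, ← hadd, hjordan]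
    have e2 : γ (x * y * z) + γ (z * y * x)
        = (γ x + γ z) * γ y * (γ x + γ z) - γ x * γ y * γ x - γ z * γ y * γ z := by
      rw [← h]; abel
    rw [e2]; noncomm_ring
  have main : ∀ x y : F, γ (x * y) = γ x * γ y ∧ γ x * γ y = γ y * γ x := by
    intro x y
    set u := γ (x * y) with hu
    set a := γ x
    set b := γ y
    have h1' : u + u = a * b + b * a := h1 x y
    have h2' : u * u = (a * b) * (b * a) := by
      have e1 : (x * y) * (x * y) = x * (y * y) * x := by ring
      have : u * u = γ ((x * y) * (x * y)) := (hsq (x * y)).symm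
      rw [this, e1, hjordan, hsq]
      noncomm_ring
    have h3' : u * u + u * u = (a * b) * u + u * (b * a) := by
      have h := hlin x (x * y) y
      have e1 : x * y * (x * y) = (x * y) * (x * y) := by ring
      have e2 : (x * y) * y * x = (x * y) * (x * y) := by ring
      rw [e1, e2, hsq (x * y)] at h
      rw [h]; noncomm_ring
    exact jordan_key u (a * b) (b * a) h1' h2' h3'
  exact ⟨fun x y => (main x y).1, fun x y => (main x y).2⟩
end

section
/- Let K be a division ring, F a subfield of K contained in the center of K, and γ : K → K an automorphism of the additive group of K with γ(1) = 1 and γ(x)*x ∈ F for every x ∈ K. Then γ(x) + x ∈ F for every x ∈ K; consequently every x ∈ K satisfies the monic quadratic relation x² − (γ(x) + x)*x + γ(x)*x = 0 with both coefficients γ(x)+x and γ(x)*x in F, i.e., K is quadratic over F. -/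
/-- If `F` is a central subfield of a division ring `K` and `γ` is an additive
automorphism of `K` with `γ 1 = 1` and `γ x * x ∈ F` for all `x`, then also
`γ x + x ∈ F` for all `x`; consequently every `x` satisfies the monic quadratic relation
`x² − (γ x + x) x + γ x * x = 0` with coefficients in `F`, i.e. `K` is quadratic over `F`. -/
theorem quadratic_over_subfield {K : Type*} [DivisionRing K] (F : Subfield K)
    (hcent : ∀ a ∈ F, ∀ b : K, a * b = b * a)
    (γ : K → K)
    (hadd : ∀ x y : K, γ (x + y) = γ x + γ y)
    (hbij : Function.Bijective γ)
    (hone : γ 1 = 1)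
    (hnorm : ∀ x : K, γ x * x ∈ F) :
    ∀ x : K, (γ x + x ∈ F) ∧ x ^ 2 - (γ x + x) * x + γ x * x = 0 := by
  intro x
  constructor
  · have h1 := hnorm (x + 1)
    rw [hadd, hone] at h1
    have h2 : (γ x + 1) * (x + 1) = γ x * x + (γ x + x) + 1 := by noncomm_ring
    rw [h2] at h1
    have := F.sub_mem (F.sub_mem h1 F.one_mem) (hnorm x)
    simpa using this
  · noncomm_ring
end

section
/- Let (K, K₀, σ) be a proper involutory set and let s, t ∈ K satisfy s*u*σ(s) = t*u*σ(t) for all u ∈ K₀. Then t⁻¹*s lies in the center of K. -/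
/-- Let `(K, K₀, σ)` be a proper involutory set and let `s, t ∈ K` satisfy
`s * u * σ s = t * u * σ t` for all `u ∈ K₀`. Then `t⁻¹ * s` is central in `K`. -/
theorem involutory_set_central {K : Type*} [DivisionRing K] (σ : K → K)
    (hσadd : ∀ x y : K, σ (x + y) = σ x + σ y)
    (hσone : σ 1 = 1)
    (hσmul : ∀ x y : K, σ (x * y) = σ y * σ x)
    (hσinv : ∀ x : K, σ (σ x) = x)
    (K₀ : AddSubgroup K)
    (h1 : (1 : K) ∈ K₀)
    (htrace : ∀ a : K, a + σ a ∈ K₀)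
    (hfix : ∀ u ∈ K₀, σ u = u)
    (hherm : ∀ a : K, ∀ u ∈ K₀, σ a * u * a ∈ K₀)
    (hproper₁ : σ ≠ id)
    (hproper₂ : Subring.closure (K₀ : Set K) = ⊤)
    (s t : K) (h : ∀ u ∈ K₀, s * u * σ s = t * u * σ t) :
    t⁻¹ * s ∈ Subring.center K := by
  have hσ0 : σ 0 = 0 := by
    have h0 := hσadd 0 0
    rw [add_zero] at h0
    exact (left_eq_add.mp h0)
  by_cases ht : t = 0
  · subst ht
    have h1' := h 1 h1
    rw [hσ0] at h1'
    simp at h1'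
    rcases h1' with hs | hs
    · simp only [hs, inv_zero, mul_zero]
      exact Subring.zero_mem _
    · have hs' : s = 0 := by rw [← hσinv s, hs, hσ0]
      simp only [hs', mul_zero]
      exact Subring.zero_mem _
  · have hσt : σ t ≠ 0 := by
      intro h0
      apply ht
      rw [← hσinv t, h0, hσ0]
    set c := t⁻¹ * s with hc
    have hs : s = t * c := by rw [hc, ← mul_assoc, mul_inv_cancel₀ ht, one_mul]
    have key : ∀ u ∈ K₀, c * u * σ c = u := by
      intro u hu
      have h' := h u hu
      rw [hs, hσmul] at h'
      have h'' : t * (c * u * σ c) * σ t = t * u * σ t := by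
        rw [← h']; simp only [mul_assoc]
      have := mul_right_cancel₀ hσt h''
      exact mul_left_cancel₀ ht this
    have hcσc : c * σ c = 1 := by
      have := key 1 h1
      simpa using this
    have hc0 : c ≠ 0 := by
      intro h0
      rw [h0, zero_mul] at hcσc
      exact zero_ne_one hcσc
    have hσc : σ c = c⁻¹ := (inv_eq_of_mul_eq_one_right hcσc).symm
    have hcomm : ∀ u ∈ K₀, u * c = c * u := by
      intro u hu
      have := key u hu
      rw [hσc] at this
      calc u * c = (c * u * c⁻¹) * c := by rw [this]
        _ = c * u := by rw [mul_assoc, inv_mul_cancel₀ hc0, mul_one]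
    rw [Subring.mem_center_iff]
    intro g
    have hg : g ∈ Subring.centralizer ({c} : Set K) := by
      have hle : Subring.closure (K₀ : Set K) ≤ Subring.centralizer ({c} : Set K) := by
        rw [Subring.closure_le]
        intro u hu
        exact Subring.mem_centralizer_iff.mpr fun m hm => by
          rw [Set.mem_singleton_iff] at hm
          subst hm
          exact (hcomm u hu).symm
      exact hle (by rw [hproper₂]; trivial)
    rw [Subring.mem_centralizer_iff] at hg
    exact (hg c rfl).symm
end

section
/- Let D be a division ring and F a subfield of D contained in the center of D with at least three elements. Let x ∈ D with x ∉ F, and let w ∈ D with w ≠ x. Then there is no z ∈ D such that for every s ∈ F there exists t ∈ F with (s + x)⁻¹ * (s + w) = z * t; that is, the set {(s + x)⁻¹ * (s + w) : s ∈ F} is not contained in any one-dimensional F-subspace z*F of D. -/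
private lemma inv_sub_inv_aux {D : Type*} [DivisionRing D] {u v : D} (hu : u ≠ 0) (hv : v ≠ 0) :
    u⁻¹ - v⁻¹ = u⁻¹ * (v - u) * v⁻¹ := by
  have h : u⁻¹ * (v - u) * v⁻¹ = u⁻¹ * (v * v⁻¹) - u⁻¹ * u * v⁻¹ := by
    rw [mul_sub, sub_mul, mul_assoc]
  rw [h, mul_inv_cancel₀ hv, inv_mul_cancel₀ hu, mul_one, one_mul]

/-- Let `D` be a division ring, `F` a central subfield with at least three elements,
`x ∈ D \ F` and `w ≠ x`. Then the set `{(s + x)⁻¹ (s + w) : s ∈ F}` is not contained in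
any one-dimensional `F`-subspace `z • F` of `D`. -/
theorem not_in_one_dim_subspace {D : Type*} [DivisionRing D] (F : Subfield D)
    (hcent : ∀ a ∈ F, ∀ b : D, a * b = b * a)
    (hcard : ∃ a ∈ F, ∃ b ∈ F, a ≠ 0 ∧ b ≠ 0 ∧ a ≠ b)
    (x : D) (hx : x ∉ F) (w : D) (hw : w ≠ x) :
    ¬ ∃ z : D, ∀ s ∈ F, ∃ t ∈ F, (s + x)⁻¹ * (s + w) = z * t := by
  obtain ⟨a, haF, b, hbF, ha0, hb0, hab⟩ := hcard
  rintro ⟨z, hz⟩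
  have hsx : ∀ s ∈ F, s + x ≠ 0 := by
    intro s hs h
    exact hx (eq_neg_of_add_eq_zero_right h ▸ F.neg_mem hs)
  have hx0 : x ≠ 0 := by simpa using hsx 0 F.zero_mem
  have hc0 : w - x ≠ 0 := sub_ne_zero.mpr hw
  -- reformulate the hypothesis
  have key : ∀ s ∈ F, ∃ t ∈ F, z * t = 1 + (s + x)⁻¹ * (w - x) := by
    intro s hs
    obtain ⟨t, htF, ht⟩ := hz s hs
    refine ⟨t, htF, ?_⟩
    rw [← ht]
    have h1 : s + w = (s + x) + (w - x) := by abel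
    rw [h1, mul_add, inv_mul_cancel₀ (hsx s hs)]
  obtain ⟨t0, ht0F, ht0⟩ := key 0 F.zero_mem
  rw [zero_add] at ht0
  -- the difference equation
  have E : ∀ s ∈ F, ∀ t : D, z * t = 1 + (s + x)⁻¹ * (w - x) →
      z * (t0 - t) = s * (x⁻¹ * ((s + x)⁻¹ * (w - x))) := by
    intro s hs t ht
    have h1 : z * (t0 - t) = x⁻¹ * (w - x) - (s + x)⁻¹ * (w - x) := by
      rw [mul_sub, ht0, ht]; abel
    have h3 : x⁻¹ - (s + x)⁻¹ = x⁻¹ * s * (s + x)⁻¹ := by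
      rw [inv_sub_inv_aux hx0 (hsx s hs), add_sub_cancel_right]
    rw [h1, ← sub_mul, h3, ← hcent s hs x⁻¹]
    simp only [mul_assoc]
  obtain ⟨ta, htaF, hta⟩ := key a haF
  obtain ⟨tb, htbF, htb⟩ := key b hbF
  have Ea := E a haF ta hta
  have Eb := E b hbF tb htb
  -- right-hand sides are nonzero
  have hRa : a * (x⁻¹ * ((a + x)⁻¹ * (w - x))) ≠ 0 :=
    mul_ne_zero ha0 (mul_ne_zero (inv_ne_zero hx0)
      (mul_ne_zero (inv_ne_zero (hsx a haF)) hc0))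
  have hRb : b * (x⁻¹ * ((b + x)⁻¹ * (w - x))) ≠ 0 :=
    mul_ne_zero hb0 (mul_ne_zero (inv_ne_zero hx0)
      (mul_ne_zero (inv_ne_zero (hsx b hbF)) hc0))
  have hta0 : t0 - ta ≠ 0 := by
    intro h; rw [h, mul_zero] at Ea; exact hRa Ea.symm
  have htb0 : t0 - tb ≠ 0 := by
    intro h; rw [h, mul_zero] at Eb; exact hRb Eb.symm
  -- introduce opaque scalars α, β
  obtain ⟨α, hαdef⟩ : ∃ α : D, α = (t0 - tb) * a := ⟨_, rfl⟩
  obtain ⟨β, hβdef⟩ : ∃ β : D, β = (t0 - ta) * b := ⟨_, rfl⟩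
  have hαF : α ∈ F := hαdef ▸ F.mul_mem (F.sub_mem ht0F htbF) haF
  have hβF : β ∈ F := hβdef ▸ F.mul_mem (F.sub_mem ht0F htaF) hbF
  have hα0 : α ≠ 0 := hαdef ▸ mul_ne_zero htb0 ha0
  have hβ0 : β ≠ 0 := hβdef ▸ mul_ne_zero hta0 hb0
  -- cross-multiply the two difference equations
  have cross : α * (x⁻¹ * ((a + x)⁻¹ * (w - x))) = β * (x⁻¹ * ((b + x)⁻¹ * (w - x))) := by
    have c1 := hcent (t0 - tb) (F.sub_mem ht0F htbF)
    have c2 := hcent (t0 - ta) (F.sub_mem ht0F htaF)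
    have h1 : (t0 - tb) * (z * (t0 - ta)) = (t0 - ta) * (z * (t0 - tb)) := by
      simp only [← mul_assoc]
      rw [c1 z, c2 z, mul_assoc, mul_assoc, c1 (t0 - ta)]
    rw [Ea, Eb] at h1
    simp only [hαdef, hβdef, mul_assoc]
    simpa only [mul_assoc] using h1
  -- move x⁻¹ to the front on both sides
  have swap : ∀ u ∈ F, ∀ v r : D, u * (x⁻¹ * (v * r)) = x⁻¹ * (u * v) * r := by
    intro u hu v r
    simp only [mul_assoc]
    rw [← mul_assoc, hcent u hu x⁻¹, mul_assoc]
  have h1 : x⁻¹ * (α * (a + x)⁻¹) * (w - x) = x⁻¹ * (β * (b + x)⁻¹) * (w - x) :=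
    (swap α hαF (a + x)⁻¹ (w - x)).symm.trans (cross.trans (swap β hβF (b + x)⁻¹ (w - x)))
  have cross2 : α * (a + x)⁻¹ = β * (b + x)⁻¹ :=
    mul_left_cancel₀ (inv_ne_zero hx0) (mul_right_cancel₀ hc0 h1)
  -- take inverses
  have cross3 : (a + x) * α⁻¹ = (b + x) * β⁻¹ := by
    have h2 := congrArg Inv.inv cross2
    rwa [mul_inv_rev, mul_inv_rev, inv_inv, inv_inv] at h2
  obtain ⟨γ, hγdef⟩ : ∃ γ : D, γ = β⁻¹ * α := ⟨_, rfl⟩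
  have hγF : γ ∈ F := hγdef ▸ F.mul_mem (F.inv_mem hβF) hαF
  have cross4 : a + x = (b + x) * γ := by
    have h1 : (a + x) * α⁻¹ * α = (b + x) * β⁻¹ * α := by rw [cross3]
    rwa [mul_assoc, inv_mul_cancel₀ hα0, mul_one, mul_assoc, ← hγdef] at h1
  have heq : a + x = b * γ + x * γ := by rw [cross4, add_mul]
  by_cases hγ1 : γ = 1
  · rw [hγ1, mul_one, mul_one] at heq
    exact hab (add_right_cancel heq)
  · have h1γ : (1 : D) - γ ≠ 0 := sub_ne_zero.mpr (Ne.symm hγ1)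
    have h5 : x * (1 - γ) = b * γ - a := by
      rw [mul_sub, mul_one, sub_eq_sub_iff_add_eq_add, add_comm x a]
      exact heq
    have h6 : x = (b * γ - a) * (1 - γ)⁻¹ := by
      rw [eq_mul_inv_iff_mul_eq₀ h1γ]; exact h5
    apply hx
    rw [h6]
    exact F.mul_mem (F.sub_mem (F.mul_mem hbF hγF) haF)
      (F.inv_mem (F.sub_mem F.one_mem hγF))
end

section
/- Let (V, K, q) be an anisotropic quadratic space with basepoint ε, let D be a division ring, and let γ : V → D be an additive bijection with γ(ε) = 1 such that γ(h_a(x)) = γ(a)*γ(x)*γ(a) for all a ∈ V with a ≠ 0 and all x ∈ V. Then the map φ : K → D defined by φ(s) := γ(s • ε) is an injective ring homomorphism: φ(1) = 1, φ is additive and injective, and φ(s*t) = φ(s)*φ(t) for all s, t ∈ K; in particular the image of φ is a subfield of D. -/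
/-- The polar form of a quadratic map. -/
def polarForm {K V : Type*} [Field K] [AddCommGroup V] (q : V → K) (x y : V) : K :=
  q (x + y) - q x - q y

/-- The Hua map `h_a (x) = f(a, σ x) • a - q a • σ x` of the Moufang set of quadratic
form type, where `σ x = f(ε, x) • ε - x`. -/
def huaMap {K V : Type*} [Field K] [AddCommGroup V] [Module K V] (q : V → K) (ε : V)
    (a x : V) : V :=
  polarForm q a (polarForm q ε x • ε - x) • a - q a • (polarForm q ε x • ε - x)

/-- If `γ` is a Jordan isomorphism from a Moufang set of quadratic form type (with
basepoint `ε`) to the Moufang set of a division ring, then `φ : s ↦ γ (s • ε)` is an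
injective ring homomorphism `K → D`. -/
theorem jordan_iso_quadratic_linear_ringHom {K V D : Type*} [Field K] [AddCommGroup V]
    [Module K V] [DivisionRing D] (q : V → K)
    (hqsmul : ∀ (s : K) (x : V), q (s • x) = s ^ 2 * q x)
    (hpaddl : ∀ x x' y : V, polarForm q (x + x') y = polarForm q x y + polarForm q x' y)
    (hpsmull : ∀ (s : K) (x y : V), polarForm q (s • x) y = s * polarForm q x y)
    (hpaddr : ∀ x y y' : V, polarForm q x (y + y') = polarForm q x y + polarForm q x y')
    (hpsmulr : ∀ (s : K) (x y : V), polarForm q x (s • y) = s * polarForm q x y)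
    (haniso : ∀ x : V, q x = 0 ↔ x = 0)
    (ε : V) (hε : q ε = 1)
    (γ : V → D) (hbij : Function.Bijective γ)
    (hadd : ∀ x y : V, γ (x + y) = γ x + γ y)
    (hγε : γ ε = 1)
    (hhua : ∀ a : V, a ≠ 0 → ∀ x : V, γ (huaMap q ε a x) = γ a * γ x * γ a) :
    γ ((1 : K) • ε) = 1 ∧
    (∀ s t : K, γ ((s + t) • ε) = γ (s • ε) + γ (t • ε)) ∧
    (Function.Injective fun s : K => γ (s • ε)) ∧
    (∀ s t : K, γ ((s * t) • ε) = γ (s • ε) * γ (t • ε)) := by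
  have hε0 : ε ≠ 0 := by
    intro h
    rw [h, (haniso 0).mpr rfl] at hε
    exact one_ne_zero hε.symm
  have hγ0 : γ (0 : V) = 0 := by
    have h := hadd 0 0
    rwa [zero_add, left_eq_add] at h
  have hpee : polarForm q ε ε = 2 := by
    have h : ε + ε = (2 : K) • ε := (two_smul K ε).symm
    unfold polarForm
    rw [h, hqsmul, hε]
    norm_num
  -- the hua map on the "line" K • ε
  have hhline : ∀ s u : K, huaMap q ε (s • ε) (u • ε) = (s ^ 2 * u) • ε := by
    intro s u
    unfold huaMap
    rw [hpsmulr, hpee]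
    have h1 : (u * 2) • ε - u • ε = u • ε := by module
    rw [h1, hpsmull, hpsmulr, hpee, hqsmul, hε]
    module
  have triple : ∀ s u : K, γ ((s ^ 2 * u) • ε) = γ (s • ε) * γ (u • ε) * γ (s • ε) := by
    intro s u
    by_cases hs : s = 0
    · subst hs
      simp [hγ0]
    · have hne : s • ε ≠ 0 := smul_ne_zero hs hε0
      rw [← hhline s u, hhua _ hne]
  have hsq : ∀ r : K, γ ((r * r) • ε) = γ (r • ε) * γ (r • ε) := by
    intro r
    have h : r * r = r ^ 2 * 1 := by ring
    rw [h, triple r 1, one_smul, hγε, mul_one]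
  have ltriple : ∀ x y u : K, γ ((x * y * u) • ε) + γ ((x * y * u) • ε) =
      γ (x • ε) * γ (u • ε) * γ (y • ε) + γ (y • ε) * γ (u • ε) * γ (x • ε) := by
    intro x y u
    have h1 := triple (x + y) u
    have hs : (x + y) ^ 2 * u = x ^ 2 * u + (x * y * u + (x * y * u + y ^ 2 * u)) := by
      ring
    rw [hs, add_smul, add_smul, add_smul, hadd, hadd, hadd, triple x u, triple y u,
      add_smul, hadd] at h1
    set A := γ (x • ε)
    set B := γ (y • ε)
    set U := γ (u • ε)
    set T := γ ((x * y * u) • ε)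
    calc T + T = A * U * A + (T + (T + B * U * B)) - A * U * A - B * U * B := by abel
      _ = (A + B) * U * (A + B) - A * U * A - B * U * B := by rw [h1]
      _ = A * U * B + B * U * A := by noncomm_ring
  refine ⟨by rw [one_smul, hγε], fun s t => by rw [add_smul, hadd], ?_, ?_⟩
  · intro s t h
    simp only at h
    have heq : s • ε = t • ε := hbij.injective h
    by_contra hne
    have hst : s - t ≠ 0 := sub_ne_zero.mpr hne
    have h0 : (s - t) • ε = 0 := by rw [sub_smul, heq, sub_self]
    have : ε = 0 := by
      have := congrArg (fun v => (s - t)⁻¹ • v) h0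
      simpa [smul_smul, inv_mul_cancel₀ hst] using this
    exact hε0 this
  · intro s t
    set a := γ (s • ε) with ha
    set b := γ (t • ε) with hb
    set c := γ ((s * t) • ε) with hc
    set X := γ ((s * t * (s * t)) • ε) with hX
    have e1 : c * c = X := by rw [hc, hX, ← hsq (s * t)]
    have e2 : a * (b * b) * a = X := by
      have h := triple s (t * t)
      have hr : s ^ 2 * (t * t) = s * t * (s * t) := by ring
      rw [hr] at h
      rw [hX, h, ha, hb, hsq t]
    have e3 : c * b * a + a * b * c = X + X := by
      have h := ltriple (s * t) s t
      have hr : s * t * s * t = s * t * (s * t) := by ring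
      rw [hr] at h
      rw [hc, hb, ha, hX, ← h]
    have e4 : a * b + b * a = c + c := by
      have h := ltriple s t 1
      rw [mul_one, one_smul, hγε, mul_one, mul_one] at h
      rw [ha, hb, hc, ← h]
    have hzero : (c - a * b) * (c - b * a) = 0 := by
      have expand : (c - a * b) * (c - b * a) =
          c * c + a * (b * b) * a - (c * b * a + a * b * c) := by noncomm_ring
      rw [expand, e1, e2, e3]
      abel
    have hneg : c - b * a = -(c - a * b) := by
      rw [neg_sub, sub_eq_sub_iff_add_eq_add]
      exact e4.symm
    rw [hneg, mul_neg, neg_eq_zero, mul_self_eq_zero, sub_eq_zero] at hzero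
    exact hzero
end

section
/- Let (V, K, q) be an anisotropic quadratic space with basepoint ε, let D be a division ring, and let γ : V → D be an additive bijection with γ(ε) = 1 such that γ(h_a(x)) = γ(a)*γ(x)*γ(a) for all a ∈ V with a ≠ 0 and all x ∈ V. Define φ : K → D by φ(s) := γ(s • ε). Then for all x ∈ V and s ∈ K one has γ(s • x) = γ(x)*φ(s) and γ(x)*φ(s) = φ(s)*γ(x); in particular the image of φ is contained in the center of D and γ is a φ-semilinear bijection. -/
lemma ring_central' {D : Type*} [DivisionRing D] (φ : D) (hφ : φ ≠ 0)
    (H : ∀ u : D, u ≠ 0 → ∀ z : D, u * φ * z * φ * u = φ * u * z * u * φ) :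
    ∀ u : D, φ * u = u * φ := by
  have key : ∀ u : D, u ≠ 0 → ∃ c : D, (∀ z, c * z = z * c) ∧ u * φ = φ * u * c := by
    intro u hu
    set c := u⁻¹ * φ⁻¹ * u * φ with hc
    set d := φ * u * φ⁻¹ * u⁻¹ with hd
    have hczd : ∀ z : D, c * z * d = z := by
      intro z
      have h := H u hu z
      have h' : u⁻¹ * (φ⁻¹ * (u * φ * z * φ * u * (φ⁻¹ * u⁻¹)))
              = u⁻¹ * (φ⁻¹ * (φ * u * z * u * φ * (φ⁻¹ * u⁻¹))) := by rw [h]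
      calc c * z * d
          = u⁻¹ * (φ⁻¹ * (u * φ * z * φ * u * (φ⁻¹ * u⁻¹))) := by
            simp only [hc, hd, mul_assoc]
        _ = u⁻¹ * (φ⁻¹ * (φ * u * z * u * φ * (φ⁻¹ * u⁻¹))) := h'
        _ = z := by
            simp only [mul_assoc, inv_mul_cancel_left₀ hu, inv_mul_cancel_left₀ hφ,
              mul_inv_cancel_left₀ hu, mul_inv_cancel_left₀ hφ,
              mul_inv_cancel₀ hu, mul_inv_cancel₀ hφ, mul_one]
    have hcd : c * d = 1 := by have := hczd 1; simpa using this
    have hc0 : c ≠ 0 := by intro h0; rw [h0, zero_mul] at hcd; exact one_ne_zero hcd.symm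
    have hdinv : d = c⁻¹ := by
      have := congrArg (fun x => c⁻¹ * x) hcd
      simpa [← mul_assoc, inv_mul_cancel₀ hc0] using this
    refine ⟨c, ?_, ?_⟩
    · intro z
      have hz := hczd z
      rw [hdinv] at hz
      calc c * z = c * z * c⁻¹ * c := by
            rw [mul_assoc (c * z), inv_mul_cancel₀ hc0, mul_one]
        _ = z * c := by rw [hz]
    · rw [hc]
      simp only [mul_assoc, mul_inv_cancel_left₀ hu, mul_inv_cancel_left₀ hφ,
        inv_mul_cancel_left₀ hu, inv_mul_cancel_left₀ hφ]
  have huφ : ∀ u : D, u ≠ 0 → u * φ = φ * u := by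
    intro u hu
    obtain ⟨c, hcz, hcu⟩ := key u hu
    by_cases hm1 : u + 1 = 0
    · have : u = -1 := by linear_combination (norm := noncomm_ring) hm1
      subst this
      noncomm_ring
    · obtain ⟨c', hcz', hcu'⟩ := key (u + 1) hm1
      have h3 : φ * u * c + φ = φ * u * c' + φ * c' := by
        rw [← hcu]
        calc u * φ + φ = (u + 1) * φ := by noncomm_ring
          _ = φ * (u + 1) * c' := hcu'
          _ = φ * u * c' + φ * c' := by noncomm_ring
      have heq : φ * (u * (c - c')) = φ * (c' - 1) := by
        calc φ * (u * (c - c')) = (φ * u * c + φ) - (φ * u * c' + φ) := by noncomm_ring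
          _ = (φ * u * c' + φ * c') - (φ * u * c' + φ) := by rw [h3]
          _ = φ * (c' - 1) := by noncomm_ring
      have heq2 : u * (c - c') = c' - 1 := mul_left_cancel₀ hφ heq
      by_cases hcc : c = c'
      · have hc'1 : c' = 1 := by
          rw [hcc, sub_self, mul_zero] at heq2
          have := heq2.symm
          rwa [sub_eq_zero] at this
        rw [hcu, hcc, hc'1, mul_one]
      · -- u is central, conclude directly
        have hccne : c - c' ≠ 0 := sub_ne_zero.mpr hcc
        have hccz : ∀ z : D, (c - c') * z = z * (c - c') := by
          intro z
          calc (c - c') * z = c * z - c' * z := by noncomm_ring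
            _ = z * c - z * c' := by rw [hcz, hcz']
            _ = z * (c - c') := by noncomm_ring
        have hccφ : Commute (c - c') φ := hccz φ
        have hinvz : Commute ((c - c')⁻¹) φ := hccφ.inv_left₀
        have hc'z : Commute (c' - 1) φ := by
          show (c' - 1) * φ = φ * (c' - 1)
          calc (c' - 1) * φ = c' * φ - φ := by noncomm_ring
            _ = φ * c' - φ := by rw [hcz']
            _ = φ * (c' - 1) := by noncomm_ring
        have hu' : u = (c' - 1) * (c - c')⁻¹ := by
          rw [← heq2, mul_assoc, mul_inv_cancel₀ hccne, mul_one]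
        rw [hu']
        exact (Commute.mul_left hc'z hinvz).eq
  intro u
  by_cases hu : u = 0
  · simp [hu]
  · exact (huφ u hu).symm

lemma ring_sq_eq' {D : Type*} [DivisionRing D] (g c : D) (hc : c ≠ 0)
    (H : ∀ z : D, g * z * g = c * z * c) : g = c ∨ g = -c := by
  have hg : g ≠ 0 := by
    intro h0
    have h1 := H 1
    rw [h0] at h1
    have hcc : c * 1 * c = 0 := by rw [← h1]; simp
    rw [mul_one] at hcc
    exact hc (mul_self_eq_zero.mp hcc)
  -- (c⁻¹ * g) * z = z * (c * g⁻¹)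
  have hkey : ∀ z : D, (c⁻¹ * g) * z = z * (c * g⁻¹) := by
    intro z
    have h := H z
    have h' : c⁻¹ * (g * z * g * g⁻¹) = c⁻¹ * (c * z * c * g⁻¹) := by rw [h]
    calc (c⁻¹ * g) * z = c⁻¹ * (g * z * g * g⁻¹) := by
          simp only [mul_assoc, mul_inv_cancel_left₀ hg, mul_inv_cancel₀ hg, mul_one]
      _ = c⁻¹ * (c * z * c * g⁻¹) := h'
      _ = z * (c * g⁻¹) := by
          simp only [mul_assoc, inv_mul_cancel_left₀ hc]
  have hd1 : c⁻¹ * g = c * g⁻¹ := by have := hkey 1; simpa using this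
  set d := c⁻¹ * g with hdd
  have hdz : ∀ z : D, d * z = z * d := by
    intro z; rw [hdd, hkey z, ← hd1]
  have hd0 : d ≠ 0 := by
    rw [hdd]; exact mul_ne_zero (inv_ne_zero hc) hg
  -- d^2 = 1 : from d = c⁻¹ g = c g⁻¹ : g = c d and c = d g, so c = d c d = c d^2
  have hgcd : g = c * d := by rw [hdd, mul_inv_cancel_left₀ hc]
  have hcdg : c = d * g := by
    have : c * g⁻¹ * g = d * g := by rw [← hd1, hdd]
    rwa [mul_assoc, inv_mul_cancel₀ hg, mul_one] at this
  have hd2 : d * d = 1 := by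
    have h1 : c = d * (c * d) := by rw [← hgcd]; exact hcdg
    have h2 : c * (d * d) = c * 1 := by
      calc c * (d * d) = (c * d) * d := (mul_assoc c d d).symm
        _ = (d * c) * d := by rw [← hdz c]
        _ = d * (c * d) := mul_assoc d c d
        _ = c := h1.symm
        _ = c * 1 := (mul_one c).symm
    exact mul_left_cancel₀ hc h2
  have : (d - 1) * (d + 1) = 0 := by
    have : d * d - 1 = 0 := by rw [hd2, sub_self]
    calc (d - 1) * (d + 1) = d * d + d - d - 1 := by noncomm_ring
      _ = d * d - 1 := by noncomm_ring
      _ = 0 := this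
  rcases mul_eq_zero.mp this with h | h
  · left
    have : d = 1 := by rwa [sub_eq_zero] at h
    rw [hgcd, this, mul_one]
  · right
    have : d = -1 := by linear_combination (norm := noncomm_ring) h
    rw [hgcd, this]
    noncomm_ring


/-- If `γ` is a Jordan isomorphism from a Moufang set of quadratic form type (with
basepoint `ε`) to the Moufang set of a division ring, then with `φ s := γ (s • ε)` one
has `γ (s • x) = γ x * φ s` and `γ x * φ s = φ s * γ x`; in particular `φ` has central
image and `γ` is `φ`-semilinear. -/
theorem jordan_iso_quadratic_linear_semilinear {K V D : Type*} [Field K] [AddCommGroup V]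
    [Module K V] [DivisionRing D] (q : V → K)
    (hqsmul : ∀ (s : K) (x : V), q (s • x) = s ^ 2 * q x)
    (hpaddl : ∀ x x' y : V, polarForm q (x + x') y = polarForm q x y + polarForm q x' y)
    (hpsmull : ∀ (s : K) (x y : V), polarForm q (s • x) y = s * polarForm q x y)
    (hpaddr : ∀ x y y' : V, polarForm q x (y + y') = polarForm q x y + polarForm q x y')
    (hpsmulr : ∀ (s : K) (x y : V), polarForm q x (s • y) = s * polarForm q x y)
    (haniso : ∀ x : V, q x = 0 ↔ x = 0)
    (ε : V) (hε : q ε = 1)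
    (γ : V → D) (hbij : Function.Bijective γ)
    (hadd : ∀ x y : V, γ (x + y) = γ x + γ y)
    (hγε : γ ε = 1)
    (hhua : ∀ a : V, a ≠ 0 → ∀ x : V, γ (huaMap q ε a x) = γ a * γ x * γ a) :
    (∀ (x : V) (s : K), γ (s • x) = γ x * γ (s • ε)) ∧
    (∀ (x : V) (s : K), γ x * γ (s • ε) = γ (s • ε) * γ x) := by
  -- basic facts
  have hγ0 : γ 0 = 0 := by
    have h := hadd 0 0
    rw [add_zero] at h
    exact (add_eq_left.mp h.symm)
  have hγneg : ∀ x : V, γ (-x) = -γ x := by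
    intro x
    have h := hadd x (-x)
    rw [add_neg_cancel, hγ0] at h
    exact (eq_neg_of_add_eq_zero_right h.symm)
  have hq0 : q 0 = 0 := (haniso 0).mpr rfl
  have hεne : ε ≠ 0 := by
    intro h; rw [h, hq0] at hε; exact zero_ne_one hε
  have hγne : ∀ x : V, x ≠ 0 → γ x ≠ 0 := by
    intro x hx h0
    exact hx (hbij.injective (h0.trans hγ0.symm))
  have hsmulne : ∀ (s : K) (a : V), s ≠ 0 → a ≠ 0 → s • a ≠ 0 := by
    intro s a hs ha h0
    have hz : q (s • a) = 0 := (haniso _).mpr h0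
    rw [hqsmul] at hz
    have hqa : q a ≠ 0 := fun h => ha ((haniso a).mp h)
    exact (mul_ne_zero (pow_ne_zero 2 hs) hqa) hz
  have hf0 : ∀ x : V, polarForm q x 0 = 0 := by
    intro x; unfold polarForm; rw [add_zero, hq0]; ring
  have hfneg : ∀ x y : V, polarForm q x (-y) = -polarForm q x y := by
    intro x y
    have h := hpaddr x y (-y)
    rw [add_neg_cancel, hf0] at h
    linear_combination -h
  have hfεε : polarForm q ε ε = 2 := by
    have h2 : q (ε + ε) = 4 := by
      rw [show ε + ε = (2 : K) • ε by rw [two_smul], hqsmul, hε]; norm_num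
    unfold polarForm; rw [h2, hε]; norm_num
  have hTσ : ∀ x : V, polarForm q ε (polarForm q ε x • ε - x) = polarForm q ε x := by
    intro x
    rw [sub_eq_add_neg, hpaddr, hpsmulr, hfεε, hfneg]
    ring
  -- Hua map computations
  have L2 : ∀ (s : K) (x : V), huaMap q ε (s • ε) x = (s * s) • x := by
    intro s x
    unfold huaMap
    rw [hpsmull, hTσ, hqsmul, hε]
    match_scalars <;> ring
  have Lσx : ∀ (a : V) (s : K) (x : V), huaMap q ε a (s • x) = s • huaMap q ε a x := by
    intro a s x
    unfold huaMap
    rw [hpsmulr s ε x]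
    have hw : (s * polarForm q ε x) • ε - s • x = s • (polarForm q ε x • ε - x) := by
      match_scalars <;> ring
    rw [hw, hpsmulr]
    match_scalars <;> ring
  have Lha : ∀ (a : V) (s : K) (x : V), huaMap q ε (s • a) x = (s * s) • huaMap q ε a x := by
    intro a s x
    unfold huaMap
    rw [hpsmull, hqsmul]
    match_scalars <;> ring
  -- γ((s*s) • x) = φ s * γ x * φ s
  have hA : ∀ (s : K) (x : V), γ ((s * s) • x) = γ (s • ε) * γ x * γ (s • ε) := by
    intro s x
    by_cases hs : s = 0
    · subst hs; simp [hγ0]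
    · have hsε : s • ε ≠ 0 := hsmulne s ε hs hεne
      have h := hhua (s • ε) hsε x
      rw [L2] at h
      exact h
  -- the "E" identity
  have hE : ∀ (s : K) (a : V), a ≠ 0 → ∀ z : D,
      γ a * γ (s • ε) * z * γ (s • ε) * γ a = γ (s • ε) * γ a * z * γ a * γ (s • ε) := by
    intro s a ha z
    obtain ⟨x, rfl⟩ := hbij.surjective z
    have h1 := hhua a ha ((s * s) • x)
    rw [Lσx a (s * s) x, hA s (huaMap q ε a x), hhua a ha x, hA s x] at h1
    simpa only [mul_assoc] using h1.symm
  -- centrality of φ s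
  have hcent : ∀ (s : K) (u : D), γ (s • ε) * u = u * γ (s • ε) := by
    intro s u
    by_cases hs : s = 0
    · subst hs; simp [hγ0]
    · have hφne : γ (s • ε) ≠ 0 := hγne _ (hsmulne s ε hs hεne)
      refine ring_central' (γ (s • ε)) hφne ?_ u
      intro w hw z
      obtain ⟨a, rfl⟩ := hbij.surjective w
      have ha : a ≠ 0 := by
        intro h0; rw [h0, hγ0] at hw; exact hw rfl
      exact hE s a ha z
  -- the squaring identity for γ (s • a)
  have hgcz : ∀ (s : K), s ≠ 0 → ∀ (a : V), a ≠ 0 → ∀ z : D,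
      γ (s • a) * z * γ (s • a) = (γ (s • ε) * γ a) * z * (γ (s • ε) * γ a) := by
    intro s hs a ha z
    obtain ⟨x, rfl⟩ := hbij.surjective z
    have h1 := hhua (s • a) (hsmulne s a hs ha) x
    rw [Lha a s x, hA s (huaMap q ε a x), hhua a ha x] at h1
    rw [← h1]
    simp only [mul_assoc]
    rw [hcent s (γ a)]
  -- main semilinearity claim
  have hmain : ∀ (s : K) (a : V), γ (s • a) = γ (s • ε) * γ a := by
    intro s
    by_cases hs : s = 0
    · intro a; subst hs; simp [hγ0]
    have key : ∀ a : V, a ≠ 0 →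
        γ (s • a) = γ (s • ε) * γ a ∨ γ (s • a) = -(γ (s • ε) * γ a) := by
      intro a ha
      exact ring_sq_eq' (γ (s • a)) (γ (s • ε) * γ a)
        (mul_ne_zero (hγne _ (hsmulne s ε hs hεne)) (hγne a ha)) (hgcz s hs a ha)
    intro a
    by_cases ha : a = 0
    · subst ha; simp [hγ0]
    rcases key a ha with h | h
    · exact h
    by_cases hopp : γ (s • ε) * γ a = -(γ (s • ε) * γ a)
    · rw [h, ← hopp]
    exfalso
    have haε : a + ε ≠ 0 := by
      intro h0
      have haa : a = -ε := eq_neg_of_add_eq_zero_left h0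
      apply hopp
      subst haa
      rw [hγneg, hγε] at h ⊢
      rw [smul_neg, hγneg] at h
      -- h : -γ (s•ε) = -(γ (s•ε) * -1)
      rw [mul_neg_one, neg_neg] at h
      -- h : -γ(s•ε) = γ(s•ε)
      rw [mul_neg_one, neg_neg]
      exact h
    have h2 := key (a + ε) haε
    rw [smul_add, hadd, hadd a ε, hγε, h] at h2
    rcases h2 with h2 | h2
    · apply hopp
      rw [mul_add, mul_one] at h2
      have h3 : -(γ (s • ε) * γ a) = γ (s • ε) * γ a := add_right_cancel h2
      exact h3.symm
    · apply hopp
      rw [mul_add, mul_one, neg_add] at h2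
      have h3 : γ (s • ε) = -γ (s • ε) := add_left_cancel h2
      have h4 : γ (s • ε) + γ (s • ε) = 0 := by
        rw [eq_neg_iff_add_eq_zero] at h3; exact h3
      have h5 : γ (s • ε) * γ a + γ (s • ε) * γ a = 0 := by
        rw [← add_mul, h4, zero_mul]
      exact eq_neg_of_add_eq_zero_left h5
  constructor
  · intro x s
    rw [hmain s x, hcent s (γ x)]
  · intro x s
    exact (hcent s (γ x)).symm
end

section
/- Let (V, K, q) be an anisotropic quadratic space with basepoint ε, let D be a division ring, and let γ : V → D be an additive bijection with γ(ε) = 1 such that γ(h_a(x)) = γ(a)*γ(x)*γ(a) for all a ∈ V with a ≠ 0 and all x ∈ V. Define φ : K → D by φ(s) := γ(s • ε). Then every x ∈ V satisfies γ(x)² − γ(x)*φ(T(x)) + φ(q(x)) = 0, where T(x) = f(ε, x); in particular, every element of D satisfies a monic quadratic equation with coefficients in the subfield φ(K), i.e., D is quadratic over φ(K), and the associated norm satisfies N(γ(x)) = φ(q(x)). -/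
/-!
Write `φ s = γ (s • ε)`. The Hua map of `s • ε` is `y ↦ s² • y`, so `γ (s² • y) = φ s * γ y * φ s`;
replacing `s` by `s + 1` gives `2 γ (s • y) = φ s * γ y + γ y * φ s`. Hence `(ad (φ s))²` vanishes
on `D = γ V`, which forces `φ s` to be central when `2 ≠ 0` in `D` (and trivially when `2 = 0`), and
then `γ (s • y) = φ s * γ y` when `2 ≠ 0`. The Hua map of `x` applied to `ε` gives
`γ (T x • x) - φ (q x) = γ x ^ 2`, which together with `γ (T x • x) = φ (T x) * γ x` is the quadratic
equation. In characteristic `2` this last identity comes instead from `h_x (x)` and from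
`h_x (s • ε)` for `s = (T x)⁻¹` and `s = (T x)⁻¹ * q x`, which force
`(φ (q x) - φ (T x) * φ ((T x)⁻¹ * q x))² = 0`.
-/

open QuadraticMap

section QuadraticForm

variable {K V : Type*} [Field K] [AddCommGroup V] [Module K V]

def quadraticFormOfPolarForm (q : V → K) (hqsmul : ∀ (s : K) (x : V), q (s • x) = s ^ 2 * q x)
    (hpaddl : ∀ x x' y : V, polarForm q (x + x') y = polarForm q x y + polarForm q x' y)
    (hpsmull : ∀ (s : K) (x y : V), polarForm q (s • x) y = s * polarForm q x y)
    (hpaddr : ∀ x y y' : V, polarForm q x (y + y') = polarForm q x y + polarForm q x y')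
    (hpsmulr : ∀ (s : K) (x y : V), polarForm q x (s • y) = s * polarForm q x y) :
    QuadraticForm K V where
  toFun := q
  toFun_smul s x := by rw [hqsmul, smul_eq_mul, pow_two]
  exists_companion' :=
    ⟨LinearMap.mk₂ K (polarForm q) hpaddl hpsmull hpaddr hpsmulr, fun x y => by
      simp only [LinearMap.mk₂_apply, polarForm]; abel⟩

variable {Q : QuadraticForm K V} {ε : V}

theorem huaMap_eq_polar (a x : V) :
    huaMap Q ε a x = polar Q a (polar Q ε x • ε - x) • a - Q a • (polar Q ε x • ε - x) :=
  rfl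

theorem huaMap_smul_basepoint (hε : Q ε = 1) (s : K) (y : V) :
    huaMap Q ε (s • ε) y = (s * s) • y := by
  rw [huaMap_eq_polar, polar_smul_left, polar_sub_right, polar_smul_right, polar_self, hε,
    QuadraticMap.map_smul, hε]
  module

theorem huaMap_apply_smul_basepoint (hε : Q ε = 1) (a : V) (s : K) :
    huaMap Q ε a (s • ε) = (s * polar Q ε a) • a - (s * Q a) • ε := by
  rw [huaMap_eq_polar, polar_smul_right, polar_self, hε]
  have hσ : (s • (2 • (1 : K))) • ε - s • ε = s • ε := by module
  rw [hσ, polar_smul_right, polar_comm]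
  module

theorem huaMap_self_of_two_eq_zero (h2 : (2 : K) = 0) (x : V) :
    huaMap Q ε x x = (polar Q ε x * polar Q ε x) • x - (Q x * polar Q ε x) • ε + Q x • x := by
  rw [huaMap_eq_polar, polar_sub_right, polar_smul_right, polar_self, polar_comm _ x ε, two_nsmul,
    ← two_mul, h2, zero_mul, sub_zero]
  module

end QuadraticForm

section Algebra

theorem commute_of_lie_lie_eq_zero {R : Type*} [Ring R] [NoZeroDivisors R] (h2 : (2 : R) ≠ 0)
    {c : R} (h : ∀ d : R, ⁅c, ⁅c, d⁆⁆ = 0) (d : R) : Commute c d := by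
  have hsq : 2 * (⁅c, d⁆ * ⁅c, d⁆) = ⁅c, ⁅c, d * d⁆⁆ - ⁅c, ⁅c, d⁆⁆ * d - d * ⁅c, ⁅c, d⁆⁆ := by
    simp only [Ring.lie_def]; noncomm_ring
  rw [h, h, zero_mul, mul_zero, sub_zero, sub_zero, mul_eq_zero, or_iff_right h2,
    mul_self_eq_zero, Ring.lie_def, sub_eq_zero] at hsq
  exact hsq

-- The relations satisfied in characteristic `2` by `u = γ x`, `α = φ (T x)`, `β = φ (q x)`,
-- `ν = φ ((T x)⁻¹ * q x)` and `p = φ (T x)⁻¹`.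
theorem eq_mul_of_two_eq_zero {R : Type*} [CommRing R] [NoZeroDivisors R] (h2 : (2 : R) = 0)
    {u α β ν p : R} (hpα : p * α = 1) (hu : u = p * (u * u) + ν)
    (hcube : α * u * α - α * ν * α + (ν * (u * u) + β * p * β) = u * u * u) : β = α * ν := by
  have : (β - α * ν) ^ 2 = 0 := by
    linear_combination α * hcube - α ^ 2 * (u + α - ν) * hu
      - (α * u ^ 2 * (u + α - ν) + β ^ 2) * hpα
      + (α ^ 2 * ν ^ 2 - α * β * ν - α ^ 2 * ν * u) * h2
  exact sub_eq_zero.mp (pow_eq_zero_iff two_ne_zero |>.mp this)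

open scoped IsMulCommutative in
theorem eq_mul_of_two_eq_zero_of_commute {R : Type*} [Ring R] [NoZeroDivisors R] (h2 : (2 : R) = 0)
    {u α β ν p : R} (hα : ∀ d, Commute α d) (hβ : ∀ d, Commute β d) (hν : ∀ d, Commute ν d)
    (hp : ∀ d, Commute p d) (hpα : p * α = 1) (hu : u = p * (u * u) + ν)
    (hcube : α * u * α - α * ν * α + (ν * (u * u) + β * p * β) = u * u * u) : β = α * ν := by
  set s : Set R := {u, α, β, ν, p}
  have hcomm : ∀ a ∈ s, ∀ b ∈ s, a * b = b * a := by
    simp only [s, Set.mem_insert_iff, Set.mem_singleton_iff]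
    rintro a (rfl | rfl | rfl | rfl | rfl) b hb
    · rcases hb with rfl | rfl | rfl | rfl | rfl
      exacts [rfl, (hα _).eq.symm, (hβ _).eq.symm, (hν _).eq.symm, (hp _).eq.symm]
    exacts [(hα b).eq, (hβ b).eq, (hν b).eq, (hp b).eq]
  have := Subring.isMulCommutative_closure hcomm
  let lift (a : R) (ha : a ∈ s) : Subring.closure s := ⟨a, Subring.subset_closure ha⟩
  exact congrArg Subtype.val <| eq_mul_of_two_eq_zero (Subtype.ext h2)
    (u := lift u (by simp [s])) (α := lift α (by simp [s])) (β := lift β (by simp [s]))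
    (ν := lift ν (by simp [s])) (p := lift p (by simp [s]))
    (Subtype.ext hpα) (Subtype.ext hu) (Subtype.ext hcube)

end Algebra

section HuaMaps

variable {K V D : Type*} [Field K] [AddCommGroup V] [Module K V] [DivisionRing D]
  {Q : QuadraticForm K V} {ε : V} {γ : V →+ D}

theorem map_mul_self_smul (hε : Q ε = 1)
    (hhua : ∀ a : V, a ≠ 0 → ∀ x : V, γ (huaMap Q ε a x) = γ a * γ x * γ a) (s : K) (y : V) :
    γ ((s * s) • y) = γ (s • ε) * γ y * γ (s • ε) := by
  rcases eq_or_ne s 0 with rfl | hs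
  · simp
  have hε0 : ε ≠ 0 := by rintro rfl; simp at hε
  rw [← huaMap_smul_basepoint hε, hhua _ (smul_ne_zero hs hε0)]

theorem two_mul_map_smul (hε : Q ε = 1)
    (hhua : ∀ a : V, a ≠ 0 → ∀ x : V, γ (huaMap Q ε a x) = γ a * γ x * γ a)
    (hγε : γ ε = 1) (s : K) (y : V) :
    2 * γ (s • y) = γ (s • ε) * γ y + γ y * γ (s • ε) := by
  have h := map_mul_self_smul hε hhua (s + 1) y
  rw [show ((s + 1) * (s + 1)) • y = (s * s) • y + s • y + s • y + y by module, map_add, map_add,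
    map_add, map_mul_self_smul hε hhua s y, add_smul, one_smul, map_add, hγε] at h
  rw [← sub_eq_zero, ← sub_eq_zero.mpr h]
  noncomm_ring

theorem commute_map_smul_basepoint (hε : Q ε = 1)
    (hhua : ∀ a : V, a ≠ 0 → ∀ x : V, γ (huaMap Q ε a x) = γ a * γ x * γ a)
    (hγε : γ ε = 1) (hsurj : Function.Surjective γ) (s : K) (d : D) :
    Commute (γ (s • ε)) d := by
  set φ := γ (s • ε)
  rcases eq_or_ne (2 : D) 0 with h2 | h2
  · obtain ⟨y, rfl⟩ := hsurj d
    have h := two_mul_map_smul hε hhua hγε s y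
    rw [h2, zero_mul] at h
    rw [Commute, SemiconjBy, ← sub_eq_zero]
    calc φ * γ y - γ y * φ = (φ * γ y + γ y * φ) - 2 * (γ y * φ) := by noncomm_ring
      _ = 0 := by rw [← h, h2]; simp
  refine commute_of_lie_lie_eq_zero h2 (fun d => ?_) d
  obtain ⟨y, rfl⟩ := hsurj d
  calc ⁅φ, ⁅φ, γ y⁆⁆ = φ * (φ * γ y + γ y * φ) + (φ * γ y + γ y * φ) * φ - 4 * (φ * γ y * φ) := by
        rw [Ring.lie_def, Ring.lie_def]; noncomm_ring
    _ = 2 * (φ * γ (s • y) + γ (s • y) * φ) - 4 * γ ((s * s) • y) := by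
        rw [← two_mul_map_smul hε hhua hγε, map_mul_self_smul hε hhua]; noncomm_ring
    _ = 0 := by
        rw [← two_mul_map_smul hε hhua hγε, smul_smul]; noncomm_ring

theorem map_smul_of_two_ne_zero (hε : Q ε = 1)
    (hhua : ∀ a : V, a ≠ 0 → ∀ x : V, γ (huaMap Q ε a x) = γ a * γ x * γ a)
    (hγε : γ ε = 1) (hsurj : Function.Surjective γ) (h2 : (2 : D) ≠ 0) (s : K) (y : V) :
    γ (s • y) = γ (s • ε) * γ y :=
  mul_left_cancel₀ h2 <| by
    rw [two_mul_map_smul hε hhua hγε, ← (commute_map_smul_basepoint hε hhua hγε hsurj s _).eq,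
      two_mul]

theorem map_inv_smul_mul_map_smul (hε : Q ε = 1)
    (hhua : ∀ a : V, a ≠ 0 → ∀ x : V, γ (huaMap Q ε a x) = γ a * γ x * γ a)
    (hinj : Function.Injective γ) {s : K} (hs : s ≠ 0) :
    γ (s⁻¹ • ε) * γ (s • ε) = 1 := by
  have hε0 : ε ≠ 0 := by rintro rfl; simp at hε
  have hp : γ (s⁻¹ • ε) ≠ 0 := by
    rw [ne_eq, ← map_zero γ, hinj.eq_iff]
    exact smul_ne_zero (inv_ne_zero hs) hε0
  have h := map_mul_self_smul hε hhua s⁻¹ (s • ε)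
  rw [smul_smul, mul_assoc, inv_mul_cancel₀ hs, mul_one] at h
  exact mul_right_cancel₀ hp (by rw [one_mul]; exact h.symm)

theorem map_mul_polar_smul (hε : Q ε = 1)
    (hhua : ∀ a : V, a ≠ 0 → ∀ x : V, γ (huaMap Q ε a x) = γ a * γ x * γ a)
    (hγε : γ ε = 1) (hsurj : Function.Surjective γ) (a : V) (s : K) :
    γ ((s * polar Q ε a) • a) = γ (s • ε) * (γ a * γ a) + γ ((s * Q a) • ε) := by
  rcases eq_or_ne a 0 with rfl | ha
  · simp
  have h := hhua a ha (s • ε)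
  rw [huaMap_apply_smul_basepoint hε, map_sub, sub_eq_iff_eq_add] at h
  rw [h, ← (commute_map_smul_basepoint hε hhua hγε hsurj s (γ a)).eq, mul_assoc]

theorem map_polar_smul_self_eq_mul_self_add (hε : Q ε = 1)
    (hhua : ∀ a : V, a ≠ 0 → ∀ x : V, γ (huaMap Q ε a x) = γ a * γ x * γ a)
    (hγε : γ ε = 1) (hsurj : Function.Surjective γ) (x : V) :
    γ (polar Q ε x • x) = γ x * γ x + γ (Q x • ε) := by
  simpa [hγε] using map_mul_polar_smul hε hhua hγε hsurj x 1

theorem map_polar_smul_self_eq_mul_of_two_eq_zero (hε : Q ε = 1)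
    (hhua : ∀ a : V, a ≠ 0 → ∀ x : V, γ (huaMap Q ε a x) = γ a * γ x * γ a)
    (hγε : γ ε = 1) (hγ : Function.Bijective γ) (h2 : (2 : D) = 0) (x : V) :
    γ (polar Q ε x • x) = γ (polar Q ε x • ε) * γ x := by
  set T := polar Q ε x with hTdef
  rcases eq_or_ne T 0 with hT | hT
  · simp [hT]
  have hx : x ≠ 0 := by rintro rfl; simp [T] at hT
  have hε0 : ε ≠ 0 := by rintro rfl; simp at hε
  have hK2 : (2 : K) = 0 := by
    have h : γ ((2 : K) • ε) = γ 0 := by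
      rw [two_smul, map_add, hγε, map_zero, one_add_one_eq_two, h2]
    simpa [hε0] using hγ.injective h
  have hcomm := commute_map_smul_basepoint hε hhua hγε hγ.surjective
  have hpα := map_inv_smul_mul_map_smul hε hhua hγ.injective hT
  have hu : γ x = γ (T⁻¹ • ε) * (γ x * γ x) + γ ((T⁻¹ * Q x) • ε) := by
    have h := map_mul_polar_smul hε hhua hγε hγ.surjective x T⁻¹
    rwa [← hTdef, inv_mul_cancel₀ hT, one_smul] at h
  have hQT : γ ((Q x * T) • ε) = γ (T • ε) * γ ((T⁻¹ * Q x) • ε) * γ (T • ε) := by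
    rw [← map_mul_self_smul hε hhua, smul_smul]
    congr 2
    field_simp
  have hQx : γ (Q x • x) =
      γ ((T⁻¹ * Q x) • ε) * (γ x * γ x) + γ (Q x • ε) * γ (T⁻¹ • ε) * γ (Q x • ε) := by
    have h := map_mul_polar_smul hε hhua hγε hγ.surjective x (T⁻¹ * Q x)
    rwa [← hTdef, show T⁻¹ * Q x * T = Q x by field_simp,
      show T⁻¹ * Q x * Q x = Q x * Q x * T⁻¹ by ring, mul_smul (Q x * Q x),
      map_mul_self_smul hε hhua] at h
  have hcube := hhua x hx x
  rw [huaMap_self_of_two_eq_zero hK2, map_add, map_sub, map_mul_self_smul hε hhua, hQT, hQx]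
    at hcube
  have hβ := eq_mul_of_two_eq_zero_of_commute h2 (hcomm _) (hcomm _) (hcomm _) (hcomm _)
    hpα hu hcube
  calc γ (T • x) = γ x * γ x + γ (T • ε) * γ ((T⁻¹ * Q x) • ε) := by
        rw [map_polar_smul_self_eq_mul_self_add hε hhua hγε hγ.surjective, hβ]
    _ = γ (T • ε) * (γ (T⁻¹ • ε) * (γ x * γ x) + γ ((T⁻¹ * Q x) • ε)) := by
        rw [mul_add, ← mul_assoc, (hcomm T (γ (T⁻¹ • ε))).eq, hpα, one_mul]
    _ = γ (T • ε) * γ x := by rw [← hu]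

theorem map_polar_smul_self_eq_mul (hε : Q ε = 1)
    (hhua : ∀ a : V, a ≠ 0 → ∀ x : V, γ (huaMap Q ε a x) = γ a * γ x * γ a)
    (hγε : γ ε = 1) (hγ : Function.Bijective γ) (x : V) :
    γ (polar Q ε x • x) = γ (polar Q ε x • ε) * γ x := by
  rcases eq_or_ne (2 : D) 0 with h2 | h2
  · exact map_polar_smul_self_eq_mul_of_two_eq_zero hε hhua hγε hγ h2 x
  · exact map_smul_of_two_ne_zero hε hhua hγε hγ.surjective h2 _ x

theorem sq_sub_mul_map_add_eq_zero (hε : Q ε = 1)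
    (hhua : ∀ a : V, a ≠ 0 → ∀ x : V, γ (huaMap Q ε a x) = γ a * γ x * γ a)
    (hγε : γ ε = 1) (hγ : Function.Bijective γ) (x : V) :
    γ x ^ 2 - γ x * γ (polar Q ε x • ε) + γ (Q x • ε) = 0 := by
  have h := map_polar_smul_self_eq_mul_self_add hε hhua hγε hγ.surjective x
  rw [map_polar_smul_self_eq_mul hε hhua hγε hγ x,
    (commute_map_smul_basepoint hε hhua hγε hγ.surjective _ (γ x)).eq] at h
  rw [h, pow_two]
  abel

end HuaMaps

theorem jordan_iso_quadratic_linear_quadratic_general {K V D : Type*} [Field K] [AddCommGroup V]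
    [Module K V] [DivisionRing D] (q : V → K)
    (hqsmul : ∀ (s : K) (x : V), q (s • x) = s ^ 2 * q x)
    (hpaddl : ∀ x x' y : V, polarForm q (x + x') y = polarForm q x y + polarForm q x' y)
    (hpsmull : ∀ (s : K) (x y : V), polarForm q (s • x) y = s * polarForm q x y)
    (hpaddr : ∀ x y y' : V, polarForm q x (y + y') = polarForm q x y + polarForm q x y')
    (hpsmulr : ∀ (s : K) (x y : V), polarForm q x (s • y) = s * polarForm q x y)
    (ε : V) (hε : q ε = 1)
    (γ : V → D) (hbij : Function.Bijective γ)
    (hadd : ∀ x y : V, γ (x + y) = γ x + γ y)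
    (hγε : γ ε = 1)
    (hhua : ∀ a : V, a ≠ 0 → ∀ x : V, γ (huaMap q ε a x) = γ a * γ x * γ a) :
    ∀ x : V, γ x ^ 2 - γ x * γ (polarForm q ε x • ε) + γ (q x • ε) = 0 :=
  sq_sub_mul_map_add_eq_zero (Q := quadraticFormOfPolarForm q hqsmul hpaddl hpsmull hpaddr hpsmulr)
    (γ := AddMonoidHom.mk' γ hadd) hε hhua hγε hbij

/-- If `γ` is a Jordan isomorphism from a Moufang set of quadratic form type (with
basepoint `ε`) to the Moufang set of a division ring, then with `φ s := γ (s • ε)` every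
`x` satisfies `γ x ^ 2 - γ x * φ (T x) + φ (q x) = 0` where `T x = f (ε, x)`; so `D` is
quadratic over the subfield `φ(K)` with norm `N (γ x) = φ (q x)`. -/
theorem jordan_iso_quadratic_linear_quadratic {K V D : Type*} [Field K] [AddCommGroup V]
    [Module K V] [DivisionRing D] (q : V → K)
    (hqsmul : ∀ (s : K) (x : V), q (s • x) = s ^ 2 * q x)
    (hpaddl : ∀ x x' y : V, polarForm q (x + x') y = polarForm q x y + polarForm q x' y)
    (hpsmull : ∀ (s : K) (x y : V), polarForm q (s • x) y = s * polarForm q x y)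
    (hpaddr : ∀ x y y' : V, polarForm q x (y + y') = polarForm q x y + polarForm q x y')
    (hpsmulr : ∀ (s : K) (x y : V), polarForm q x (s • y) = s * polarForm q x y)
    (haniso : ∀ x : V, q x = 0 ↔ x = 0)
    (ε : V) (hε : q ε = 1)
    (γ : V → D) (hbij : Function.Bijective γ)
    (hadd : ∀ x y : V, γ (x + y) = γ x + γ y)
    (hγε : γ ε = 1)
    (hhua : ∀ a : V, a ≠ 0 → ∀ x : V, γ (huaMap q ε a x) = γ a * γ x * γ a) :
    ∀ x : V, γ x ^ 2 - γ x * γ (polarForm q ε x • ε) + γ (q x • ε) = 0 :=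
  jordan_iso_quadratic_linear_quadratic_general q hqsmul hpaddl hpsmull hpaddr hpsmulr ε hε γ hbij
    hadd hγε hhua
end

section
/- Let (V, K, q) be an anisotropic quadratic space with basepoint ε, and let (Ṽ, K̃, q̃) be an anisotropic quadratic space with basepoint ε̃ whose polar form f̃ is not identically zero and with dim_{K̃} Ṽ ≥ 3. Let γ : V → Ṽ be an additive bijection with γ(ε) = ε̃ such that γ(h_a(x)) = h̃_{γ(a)}(γ(x)) for all a ∈ V with a ≠ 0 and all x ∈ V, where h and h̃ denote the Hua maps of the two spaces. Then there exists a field isomorphism φ : K → K̃ such that γ(s • x) = φ(s) • γ(x) and q̃(γ(x)) = φ(q(x)) for all x ∈ V and s ∈ K; i.e., (γ, φ) is an isomorphism of quadratic spaces. -/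
/-!
The map `γ` conjugates every scalar multiplication `s • ·` of `V` into an additive map of `Ṽ`
commuting with all Hua maps. Writing `h_b = P_b ∘ P_ε` with `P_b y = f(b, y) • b - q(b) • y`
(`QuadraticMap.scaledReflection`), such a map `ω` satisfies `ω ∘ P_b = P_b ∘ W` for
`W = P_ε ∘ ω ∘ P_ε`. Linearizing in `b` shows that `f(W y, ·)` vanishes wherever `f(y, ·)` does,
so `W y ≡ c_y • y` modulo the radical; the dimension hypothesis makes `c_y` independent of `y` and
the radical part vanish. Hence `γ` is semilinear for a ring homomorphism `φ`. Properness and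
dimension transfer back to `V`, so the same argument for `γ⁻¹` makes `φ` surjective, and comparing
the coefficients of `ε̃` in `γ (h_x ε) = h̃_{γ x} ε̃` gives `q̃ ∘ γ = φ ∘ q`.
-/

open Module Submodule

section LinearAlgebra

variable {K V : Type*} [Field K] [AddCommGroup V] [Module K V]

theorem exists_ne_zero_apply_eq_zero_of_three_le_rank (hrank : 3 ≤ Module.rank K V)
    (φ ψ : V →ₗ[K] K) : ∃ x ≠ 0, φ x = 0 ∧ ψ x = 0 := by
  by_contra! h
  have hinj : Function.Injective (φ.prod ψ) := by
    rw [← LinearMap.ker_eq_bot, LinearMap.ker_eq_bot']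
    intro x hx
    by_contra hx0
    exact h x hx0 (congrArg Prod.fst hx) (congrArg Prod.snd hx)
  have hle := (Cardinal.lift_le.mpr hrank).trans (LinearMap.lift_rank_le_of_injective _ hinj)
  rw [rank_prod', Module.rank_self] at hle
  norm_num at hle

theorem exists_apply_eq_zero_notMem_span_singleton (hrank : 3 ≤ Module.rank K V)
    (φ : V →ₗ[K] K) {z : V} (hz : z ≠ 0) : ∃ x, φ x = 0 ∧ x ∉ K ∙ z := by
  obtain ⟨δ, hδ⟩ := Projective.exists_dual_ne_zero K hz
  obtain ⟨x, hx0, hφx, hδx⟩ := exists_ne_zero_apply_eq_zero_of_three_le_rank hrank φ δ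
  refine ⟨x, hφx, fun hx => ?_⟩
  obtain ⟨a, rfl⟩ := mem_span_singleton.mp hx
  rw [map_smul, smul_eq_mul, mul_eq_zero] at hδx
  exact hx0 (by simp [hδx.resolve_right hδ])

theorem span_singleton_ne_top_of_one_lt_rank (hrank : 1 < Module.rank K V) (z : V) :
    K ∙ z ≠ ⊤ := by
  intro h
  refine hrank.not_ge (rank_le_one_iff.mpr ⟨z, fun v => ?_⟩)
  exact mem_span_singleton.mp (h ▸ mem_top)

theorem mem_span_singleton_of_smul_eq_smul {a b : K} {x y : V} (ha : a ≠ 0)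
    (h : a • x = b • y) : x ∈ K ∙ y :=
  (smul_mem_iff _ ha).mp (h ▸ smul_mem _ b (mem_span_singleton_self y))

theorem mem_span_singleton_symm {x y : V} (hx : x ≠ 0) (h : x ∈ K ∙ y) : y ∈ K ∙ x := by
  obtain ⟨a, rfl⟩ := mem_span_singleton.mp h
  exact mem_span_singleton_of_smul_eq_smul (left_ne_zero_of_smul hx) (one_smul K _).symm

theorem exists_eq_smul_of_ker_le {f g : V →ₗ[K] K} (h : LinearMap.ker f ≤ LinearMap.ker g) :
    ∃ c : K, g = c • f := by
  have hg := mem_span_of_iInf_ker_le_ker (L := fun _ : Unit => f) (by simpa using h)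
  rw [Set.range_const, mem_span_singleton] at hg
  obtain ⟨c, hc⟩ := hg
  exact ⟨c, hc.symm⟩

theorem LinearMap.apply_eq_zero_of_forall_notMem {M : Type*} [AddCommGroup M] [Module K M]
    {p : Submodule K V} (hp : p ≠ ⊤) {L : V →ₗ[K] M} (h : ∀ x ∉ p, L x = 0) (x : V) :
    L x = 0 := by
  by_cases hx : x ∈ p
  · obtain ⟨u, hu⟩ := SetLike.exists_not_mem_of_ne_top p hp
    have hxu : x + u ∉ p := fun hxu => hu (by simpa using sub_mem hxu hx)
    rw [← add_sub_cancel_right x u, map_sub, h _ hxu, h u hu, sub_zero]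
  · exact h x hx

theorem LinearIndependent.pair_left_or_right {x y z : V} (hxy : LinearIndependent K ![x, y])
    (hz : z ≠ 0) : LinearIndependent K ![x, z] ∨ LinearIndependent K ![y, z] := by
  by_contra! h
  have hx : x ≠ 0 := hxy.ne_zero 0
  have hy : y ≠ 0 := hxy.ne_zero 1
  simp only [LinearIndependent.pair_iff' hx, LinearIndependent.pair_iff' hy, not_forall,
    not_not] at h
  obtain ⟨⟨a, rfl⟩, ⟨b, hb⟩⟩ := h
  have := (LinearIndependent.pair_iff.mp hxy a (-b) (by rw [neg_smul, hb, add_neg_cancel])).1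
  exact hz (by rw [this, zero_smul])

variable {M : Type*} [AddCommGroup M] [Module K M] {Λ : V →ₗ[K] M} {A : V →+ M}

theorem eq_of_linearIndependent_of_eq_smul (hA : ∀ y, ∃ c : K, A y = c • Λ y) {y z : V}
    (hyz : LinearIndependent K ![Λ y, Λ z]) {a b : K} (hy : A y = a • Λ y)
    (hz : A z = b • Λ z) : a = b := by
  obtain ⟨c, hc⟩ := hA (y + z)
  rw [map_add, map_add, hy, hz] at hc
  have h := LinearIndependent.pair_iff.mp hyz (c - a) (c - b) (by
    linear_combination (norm := module) -hc)
  rw [sub_eq_zero, sub_eq_zero] at h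
  exact h.1.symm.trans h.2

theorem exists_forall_eq_smul_of_forall_exists (hA : ∀ y, ∃ c : K, A y = c • Λ y) {u v : V}
    (huv : LinearIndependent K ![Λ u, Λ v]) : ∃ c : K, ∀ y, A y = c • Λ y := by
  obtain ⟨a, ha⟩ := hA u
  obtain ⟨b, hb⟩ := hA v
  have hab := eq_of_linearIndependent_of_eq_smul hA huv ha hb
  refine ⟨a, fun y => ?_⟩
  obtain ⟨c, hc⟩ := hA y
  by_cases hy : Λ y = 0
  · rw [hc, hy, smul_zero, smul_zero]
  rcases huv.pair_left_or_right hy with h | h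
  · rw [hc, eq_of_linearIndependent_of_eq_smul hA h ha hc]
  · rw [hc, hab, eq_of_linearIndependent_of_eq_smul hA h hb hc]

end LinearAlgebra

theorem exists_ringHom_of_forall_exists_smul {K V K' V' F : Type*} [Semiring K]
    [AddCommMonoid V] [Module K V] [DivisionRing K'] [AddCommGroup V'] [Module K' V']
    [FunLike F V V'] [AddMonoidHomClass F V V'] (e : F) {ε : V} (hε : e ε ≠ 0)
    (h : ∀ s : K, ∃ c : K', ∀ x, e (s • x) = c • e x) :
    ∃ φ : K →+* K', ∀ s x, e (s • x) = φ s • e x := by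
  choose φ hφ using h
  have hinj := smul_left_injective K' hε
  refine ⟨
    { toFun := φ
      map_one' := hinj (by simp only [← hφ, one_smul])
      map_mul' := fun s t => hinj (by simp only [← hφ, mul_smul])
      map_zero' := hinj (by simp only [← hφ, zero_smul, map_zero])
      map_add' := fun s t => hinj (by simp only [← hφ, add_smul, map_add]) }, hφ⟩

@[simp]
theorem polarForm_eq_polar {K V : Type*} [Field K] [AddCommGroup V] (q : V → K) :
    polarForm q = QuadraticMap.polar q := rfl

namespace QuadraticMap

variable {K V : Type*} [Field K] [AddCommGroup V] [Module K V] {Q : QuadraticForm K V}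

theorem polar_self_eq_two_mul (x : V) : polar Q x x = 2 * Q x := by
  rw [polar_self, nsmul_eq_mul, Nat.cast_ofNat]

theorem Anisotropic.two_eq_zero_of_polar_self_eq_zero (hQ : Q.Anisotropic) {x : V} (hx : x ≠ 0)
    (hxx : polar Q x x = 0) : (2 : K) = 0 := by
  rw [polar_self_eq_two_mul, mul_eq_zero] at hxx
  exact hxx.resolve_right (mt (hQ x) hx)

variable (Q) in
/-- `Q.scaledReflection b` is `-Q b` times the reflection in `b`. -/
def scaledReflection (b : V) : V →ₗ[K] V :=
  (polarBilin Q b).smulRight b - Q b • LinearMap.id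

variable (Q) in
def scaledReflection₂ (b b' : V) : V →ₗ[K] V :=
  ((polarBilin Q).flip b).smulRight b' + ((polarBilin Q).flip b').smulRight b -
    polar Q b b' • LinearMap.id

@[simp]
theorem scaledReflection_apply (b y : V) :
    Q.scaledReflection b y = polar Q b y • b - Q b • y := rfl

@[simp]
theorem scaledReflection₂_apply (b b' y : V) :
    Q.scaledReflection₂ b b' y = polar Q y b • b' + polar Q y b' • b - polar Q b b' • y := rfl

theorem scaledReflection_add (b b' : V) : Q.scaledReflection (b + b') =
    Q.scaledReflection b + Q.scaledReflection b' + Q.scaledReflection₂ b b' := by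
  ext y
  simp only [scaledReflection_apply, LinearMap.add_apply, scaledReflection₂_apply,
    polar_add_left, QuadraticMap.map_add (⇑Q) b b']
  rw [polar_comm Q y b, polar_comm Q y b']
  module

theorem scaledReflection_scaledReflection (b y : V) :
    Q.scaledReflection b (Q.scaledReflection b y) = Q b ^ 2 • y := by
  simp only [scaledReflection_apply, polar_sub_right, polar_smul_right, polar_self_eq_two_mul,
    smul_eq_mul]
  module

section Centroid

variable {ω W : V →+ V}

theorem map_scaledReflection₂
    (h : ∀ b y, ω (Q.scaledReflection b y) = Q.scaledReflection b (W y)) (b b' y : V) :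
    ω (Q.scaledReflection₂ b b' y) = Q.scaledReflection₂ b b' (W y) := by
  have hbb' := h (b + b') y
  rw [scaledReflection_add, LinearMap.add_apply, LinearMap.add_apply, map_add, map_add, h, h,
    LinearMap.add_apply, LinearMap.add_apply] at hbb'
  exact add_left_cancel hbb'

theorem polar_map_eq_zero_of_notMem_span_singleton
    (h : ∀ b y, ω (Q.scaledReflection b y) = Q.scaledReflection b (W y)) {y b b' : V}
    (hb : polar Q y b = 0) (hb' : polar Q y b' = 0) (hbb' : polar Q b b' = 0)
    (hb'b : b' ∉ K ∙ b) : polar Q (W y) b = 0 := by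
  have h₂ := map_scaledReflection₂ h b b' y
  simp only [scaledReflection₂_apply, hb, hb', hbb', zero_smul, add_zero, sub_zero, map_zero]
    at h₂
  by_contra hne
  refine hb'b (mem_span_singleton_of_smul_eq_smul hne (b := -polar Q (W y) b') ?_)
  rw [neg_smul, eq_neg_iff_add_eq_zero, h₂]

theorem ker_polarBilin_le_ker_polarBilin_map (hQ : Q.Anisotropic) (hrank : 3 ≤ Module.rank K V)
    (h : ∀ b y, ω (Q.scaledReflection b y) = Q.scaledReflection b (W y)) (y : V) :
    LinearMap.ker (polarBilin Q y) ≤ LinearMap.ker (polarBilin Q (W y)) := by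
  intro b hb
  simp only [LinearMap.mem_ker, polarBilin_apply_apply] at hb ⊢
  by_cases h2 : (2 : K) = 0
  · rcases eq_or_ne y 0 with rfl | hy
    · rw [map_zero, polar_zero_left]
    -- `b' = y` works unless `b ∈ K ∙ y`, and that case is reduced to `b + b₁ ∉ K ∙ y`
    have hyy : polar Q y y = 0 := by rw [polar_self_eq_two_mul, h2, zero_mul]
    have key : ∀ b, polar Q y b = 0 → b ∉ K ∙ y → polar Q (W y) b = 0 := fun b hb hby =>
      polar_map_eq_zero_of_notMem_span_singleton h hb hyy (by rwa [polar_comm])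
        (fun hyb => hby (mem_span_singleton_symm hy hyb))
    obtain ⟨b₁, hb₁, hb₁y⟩ := exists_apply_eq_zero_notMem_span_singleton hrank (polarBilin Q y) hy
    rw [polarBilin_apply_apply] at hb₁
    by_cases hby : b ∈ K ∙ y
    · have hsum : b + b₁ ∉ K ∙ y := fun hs => hb₁y (by simpa using sub_mem hs hby)
      have := key (b + b₁) (by rw [polar_add_right, hb, hb₁, add_zero]) hsum
      rwa [polar_add_right, key b₁ hb₁ hb₁y, add_zero] at this
    · exact key b hb hby
  · rcases eq_or_ne b 0 with rfl | hb0
    · exact polar_zero_right _ _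
    obtain ⟨b', hb'0, hb'y, hb'b⟩ :=
      exists_ne_zero_apply_eq_zero_of_three_le_rank hrank (polarBilin Q y) (polarBilin Q b)
    rw [polarBilin_apply_apply] at hb'y hb'b
    refine polar_map_eq_zero_of_notMem_span_singleton h hb hb'y hb'b fun hb' => ?_
    obtain ⟨a, rfl⟩ := mem_span_singleton.mp hb'
    rw [polar_smul_right, smul_eq_mul, mul_eq_zero] at hb'b
    rcases hb'b with ha | hbb
    · exact hb'0 (by rw [ha, zero_smul])
    · exact h2 (hQ.two_eq_zero_of_polar_self_eq_zero hb0 hbb)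

theorem exists_linearIndependent_polarBilin (hQ : Q.Anisotropic)
    (hrank : 3 ≤ Module.rank K V) (hf : ∃ x y, polar Q x y ≠ 0) :
    ∃ u v, LinearIndependent K ![polarBilin Q u, polarBilin Q v] := by
  obtain ⟨u, v, huv⟩ := hf
  have hv : polarBilin Q v ≠ 0 := fun h0 => huv (by
    rw [polar_comm, ← polarBilin_apply_apply, h0, LinearMap.zero_apply])
  refine ⟨v, ?_⟩
  by_contra! hdep
  simp only [LinearIndependent.pair_iff' hv, not_forall, not_not] at hdep
  obtain ⟨x, hx0, hvx, -⟩ :=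
    exists_ne_zero_apply_eq_zero_of_three_le_rank hrank (polarBilin Q v) (polarBilin Q v)
  obtain ⟨a, ha⟩ := hdep x
  have hxx : polar Q x x = 0 := by
    rw [← polarBilin_apply_apply, ← ha, LinearMap.smul_apply, hvx, smul_zero]
  have hvv : polar Q v v = 0 := by
    rw [polar_self_eq_two_mul, hQ.two_eq_zero_of_polar_self_eq_zero hx0 hxx, zero_mul]
  refine hv (LinearMap.ext fun z => ?_)
  obtain ⟨c, hc⟩ := hdep z
  rw [polarBilin_apply_apply, polar_comm, ← polarBilin_apply_apply, ← hc, LinearMap.smul_apply,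
    polarBilin_apply_apply, hvv, smul_zero, LinearMap.zero_apply]

theorem polar_smul_map_sub_smul_eq_zero (h2 : (2 : K) = 0)
    (h : ∀ b y, ω (Q.scaledReflection b y) = Q.scaledReflection b (W y)) {c : K}
    (hc : ∀ y, polarBilin Q (W y) = c • polarBilin Q y) (b y : V) :
    polar Q b y • (W y - c • y) = 0 := by
  have hyy : polar Q y y = 0 := by rw [polar_self_eq_two_mul, h2, zero_mul]
  have hWy : ∀ z, polar Q (W y) z = c * polar Q y z := fun z => by
    rw [← polarBilin_apply_apply, hc, LinearMap.smul_apply, polarBilin_apply_apply, smul_eq_mul]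
  have h₂ := map_scaledReflection₂ h b y y
  rw [scaledReflection₂_apply, scaledReflection₂_apply, hWy b, hWy y, hyy, polar_comm Q y b]
    at h₂
  simp only [zero_smul, mul_zero, add_zero, sub_self, map_zero] at h₂
  linear_combination (norm := module) h₂

theorem exists_forall_eq_smul_of_map_scaledReflection (hQ : Q.Anisotropic)
    (hrank : 3 ≤ Module.rank K V) (hf : ∃ x y, polar Q x y ≠ 0)
    (h : ∀ b y, ω (Q.scaledReflection b y) = Q.scaledReflection b (W y)) :
    ∃ c : K, ∀ y, W y = c • y := by
  obtain ⟨_, _, hΛ⟩ := exists_linearIndependent_polarBilin hQ hrank hf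
  obtain ⟨c, hc⟩ := exists_forall_eq_smul_of_forall_exists
    (A := (polarBilin Q).toAddMonoidHom.comp W)
    (fun y => exists_eq_smul_of_ker_le (ker_polarBilin_le_ker_polarBilin_map hQ hrank h y)) hΛ
  simp only [AddMonoidHom.coe_comp, LinearMap.toAddMonoidHom_coe, Function.comp_apply] at hc
  refine ⟨c, fun y => sub_eq_zero.mp ?_⟩
  by_cases h2 : (2 : K) = 0
  · obtain ⟨u, v, huv⟩ := hf
    have hnonrad : ∀ y b, polar Q b y ≠ 0 → W y - c • y = 0 := fun y b hb =>
      (smul_eq_zero.mp (polar_smul_map_sub_smul_eq_zero h2 h hc b y)).resolve_left hb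
    by_cases hy : ∃ b, polar Q b y ≠ 0
    · obtain ⟨b, hb⟩ := hy
      exact hnonrad y b hb
    · simp only [not_exists, not_not] at hy
      have hv := hnonrad v u huv
      have hyv := hnonrad (y + v) u (by rwa [polar_add_right, hy, zero_add])
      rw [map_add, smul_add] at hyv
      linear_combination (norm := module) hyv - hv
  · by_contra hne
    refine h2 (hQ.two_eq_zero_of_polar_self_eq_zero hne ?_)
    have hrad : polarBilin Q (W y - c • y) = 0 := by rw [map_sub, map_smul, hc, sub_self]
    rw [← polarBilin_apply_apply, hrad, LinearMap.zero_apply]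

end Centroid

variable {ε : V}

theorem huaMap_eq_scaledReflection (hε : Q ε = 1) (a x : V) :
    huaMap Q ε a x = Q.scaledReflection a (Q.scaledReflection ε x) := by
  rw [scaledReflection_apply, scaledReflection_apply, hε, one_smul, huaMap, polarForm_eq_polar]

theorem huaMap_smul (a : V) (s : K) (x : V) : huaMap Q ε a (s • x) = s • huaMap Q ε a x := by
  simp only [huaMap, polarForm_eq_polar, polar_smul_right, polar_sub_right, smul_eq_mul]
  module

theorem huaMap_zero_left (x : V) : huaMap Q ε 0 x = 0 := by
  simp [huaMap]

theorem huaMap_basepoint (hε : Q ε = 1) (a : V) :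
    huaMap Q ε a ε = polar Q a ε • a - Q a • ε := by
  have hσε : (2 * 1 : K) • ε - ε = ε := by module
  rw [huaMap, polarForm_eq_polar, polar_self_eq_two_mul, hε, hσε]

theorem huaMap_eq_smul_of_polar_eq_zero (h0 : ∀ x y, polar Q x y = 0) (a x : V) :
    huaMap Q ε a x = Q a • x := by
  simp [huaMap, h0]

theorem polar_eq_zero_of_forall_huaMap_eq_smul (hε : Q ε = 1) (hrank : 1 < Module.rank K V)
    (h : ∀ b, ∃ μ : K, ∀ x, huaMap Q ε b x = μ • x) (b x : V) : polar Q b x = 0 := by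
  have hT : ∀ z, polar Q ε z = 0 := by
    refine LinearMap.apply_eq_zero_of_forall_notMem (L := polarBilin Q ε)
      (span_singleton_ne_top_of_one_lt_rank hrank ε) fun z hz => ?_
    obtain ⟨μ, hμ⟩ := h z
    have hzε := hμ ε
    rw [huaMap_basepoint hε] at hzε
    by_contra hne
    refine hz (mem_span_singleton_of_smul_eq_smul (a := polar Q z ε) (b := μ + Q z) ?_ ?_)
    · rwa [polar_comm, ← polarBilin_apply_apply]
    · linear_combination (norm := module) hzε
  refine LinearMap.apply_eq_zero_of_forall_notMem (L := polarBilin Q b)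
    (span_singleton_ne_top_of_one_lt_rank hrank b) (fun z hz => ?_) x
  obtain ⟨μ, hμ⟩ := h b
  have hbz := hμ z
  simp only [huaMap, polarForm_eq_polar, hT, zero_smul, zero_sub, polar_neg_right] at hbz
  by_contra hne
  rw [polarBilin_apply_apply] at hne
  have hb : b ≠ 0 := by rintro rfl; exact hne (polar_zero_left _ _)
  refine hz (mem_span_singleton_symm hb (mem_span_singleton_of_smul_eq_smul hne
    (b := Q b - μ) ?_))
  linear_combination (norm := module) -hbz

theorem exists_forall_eq_smul_of_commute_huaMap (hQ : Q.Anisotropic)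
    (hrank : 3 ≤ Module.rank K V) (hf : ∃ x y, polar Q x y ≠ 0) (hε : Q ε = 1) {ω : V →+ V}
    (h : ∀ b x, ω (huaMap Q ε b x) = huaMap Q ε b (ω x)) : ∃ c : K, ∀ x, ω x = c • x := by
  let σ := Q.scaledReflection ε
  have hσ : ∀ x, σ (σ x) = x := fun x => by
    rw [scaledReflection_scaledReflection, hε, one_pow, one_smul]
  have hW : ∀ b y, ω (Q.scaledReflection b y) =
      Q.scaledReflection b ((σ.toAddMonoidHom.comp (ω.comp σ.toAddMonoidHom)) y) := fun b y => by
    have hby := h b (σ y)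
    rwa [huaMap_eq_scaledReflection hε, huaMap_eq_scaledReflection hε, hσ] at hby
  obtain ⟨c, hc⟩ := exists_forall_eq_smul_of_map_scaledReflection hQ hrank hf hW
  refine ⟨c, fun x => ?_⟩
  have hσx : σ (ω x) = c • σ x := by simpa [hσ] using hc (σ x)
  rw [← hσ (ω x), hσx, map_smul, hσ]

variable {K' V' : Type*} [Field K'] [AddCommGroup V'] [Module K' V'] {Q' : QuadraticForm K' V'}
  {ε' : V'}

theorem exists_forall_map_smul_eq_smul_of_huaMap (hQ' : Q'.Anisotropic)
    (hrank' : 3 ≤ Module.rank K' V') (hf' : ∃ x y, polar Q' x y ≠ 0) (hε' : Q' ε' = 1)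
    (e : V ≃+ V') (he : ∀ a x, e (huaMap Q ε a x) = huaMap Q' ε' (e a) (e x)) (s : K) :
    ∃ c : K', ∀ x, e (s • x) = c • e x := by
  let ω : V' →+ V' :=
    e.toAddMonoidHom.comp ((DistribSMul.toAddMonoidHom V s).comp e.symm.toAddMonoidHom)
  have hω : ∀ b x, ω (huaMap Q' ε' b x) = huaMap Q' ε' b (ω x) := fun b x => by
    have hsymm : e.symm (huaMap Q' ε' b x) = huaMap Q ε (e.symm b) (e.symm x) := by
      rw [e.symm_apply_eq, he, e.apply_symm_apply, e.apply_symm_apply]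
    simp only [ω, AddMonoidHom.coe_comp, Function.comp_apply, AddEquiv.coe_toAddMonoidHom,
      DistribSMul.toAddMonoidHom_apply, hsymm, ← huaMap_smul, he, e.apply_symm_apply]
  obtain ⟨c, hc⟩ := exists_forall_eq_smul_of_commute_huaMap hQ' hrank' hf' hε' hω
  exact ⟨c, fun x => by simpa [ω] using hc (e x)⟩

theorem exists_ringEquiv_of_huaMap (hQ : Q.Anisotropic) (hε : Q ε = 1) (hQ' : Q'.Anisotropic)
    (hε' : Q' ε' = 1) (hf' : ∃ x y, polar Q' x y ≠ 0) (hrank' : 3 ≤ Module.rank K' V')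
    (e : V ≃+ V') (heε : e ε = ε') (he : ∀ a x, e (huaMap Q ε a x) = huaMap Q' ε' (e a) (e x)) :
    ∃ φ : K ≃+* K', ∀ s x, e (s • x) = φ s • e x := by
  have hε'0 : ε' ≠ 0 := by rintro rfl; simp at hε'
  obtain ⟨φ, hφ⟩ := exists_ringHom_of_forall_exists_smul e (by rwa [heε])
    (exists_forall_map_smul_eq_smul_of_huaMap hQ' hrank' hf' hε' e he)
  have he' : ∀ a x, e.symm (huaMap Q' ε' a x) = huaMap Q ε (e.symm a) (e.symm x) := by
    intro a x
    rw [e.symm_apply_eq, he, e.apply_symm_apply, e.apply_symm_apply]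
  have hrank : 3 ≤ Module.rank K V := by
    have hle := lift_rank_le_of_injective_injectiveₛ φ e.symm.toAddMonoidHom φ.injective
      e.symm.injective fun s x => by simp [e.symm_apply_eq, hφ]
    simpa using (Cardinal.lift_le.mpr hrank').trans hle
  have hf : ∃ x y, polar Q x y ≠ 0 := by
    -- otherwise every Hua map of `V`, hence every Hua map of `V'`, is a scalar
    by_contra! h0
    obtain ⟨x, y, hxy⟩ := hf'
    refine hxy (polar_eq_zero_of_forall_huaMap_eq_smul hε' (lt_of_lt_of_le (by norm_num) hrank')
      (fun b => ⟨φ (Q (e.symm b)), fun x => ?_⟩) x y)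
    rw [← e.apply_symm_apply (huaMap Q' ε' b x), he', huaMap_eq_smul_of_polar_eq_zero h0, hφ,
      e.apply_symm_apply]
  have hsurj : Function.Surjective φ := fun c => by
    obtain ⟨s, hs⟩ := exists_forall_map_smul_eq_smul_of_huaMap hQ hrank hf hε e.symm he' c
    refine ⟨s, smul_left_injective K' hε'0 ?_⟩
    calc φ s • ε' = e (s • e.symm ε') := by rw [hφ, ← heε, e.symm_apply_apply]
      _ = c • ε' := by rw [← hs, e.apply_symm_apply]
  exact ⟨RingEquiv.ofBijective φ ⟨φ.injective, hsurj⟩, hφ⟩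

theorem map_apply_eq_of_huaMap (hε : Q ε = 1) (hε' : Q' ε' = 1) (φ : K ≃+* K') (e : V ≃+ V')
    (hφ : ∀ s x, e (s • x) = φ s • e x) (heε : e ε = ε')
    (he : ∀ x, e (huaMap Q ε x ε) = huaMap Q' ε' (e x) (e ε)) (x : V) :
    Q' (e x) = φ (Q x) := by
  have hε'0 : ε' ≠ 0 := by rintro rfl; simp at hε'
  have hx := he x
  rw [heε, huaMap_basepoint hε, huaMap_basepoint hε', map_sub, hφ, hφ, heε] at hx
  by_cases hind : LinearIndependent K' ![e x, ε']
  · have := (LinearIndependent.pair_iff.mp hind (φ (polar Q x ε) - polar Q' (e x) ε')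
      (Q' (e x) - φ (Q x)) (by linear_combination (norm := module) hx)).2
    exact sub_eq_zero.mp this
  · rw [LinearIndependent.pair_symm_iff, LinearIndependent.pair_iff' hε'0] at hind
    simp only [not_forall, not_not] at hind
    obtain ⟨c, hc⟩ := hind
    obtain ⟨s, rfl⟩ := φ.surjective c
    have hxs : x = s • ε := e.injective (by rw [hφ, heε, hc])
    rw [← hc, hxs, QuadraticMap.map_smul, QuadraticMap.map_smul, hε, hε', smul_eq_mul,
      smul_eq_mul, mul_one, mul_one, map_mul]

end QuadraticMap

theorem jordan_iso_quadratic_quadratic_general {K V K' V' : Type*} [Field K] [AddCommGroup V]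
    [Module K V] [Field K'] [AddCommGroup V'] [Module K' V']
    (q : V → K)
    (hqsmul : ∀ (s : K) (x : V), q (s • x) = s ^ 2 * q x)
    (hpaddl : ∀ x x' y : V, polarForm q (x + x') y = polarForm q x y + polarForm q x' y)
    (hpsmull : ∀ (s : K) (x y : V), polarForm q (s • x) y = s * polarForm q x y)
    (haniso : ∀ x : V, q x = 0 ↔ x = 0)
    (ε : V) (hε : q ε = 1)
    (q' : V' → K')
    (hqsmul' : ∀ (s : K') (x : V'), q' (s • x) = s ^ 2 * q' x)
    (hpaddl' : ∀ x x' y : V', polarForm q' (x + x') y = polarForm q' x y + polarForm q' x' y)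
    (hpsmull' : ∀ (s : K') (x y : V'), polarForm q' (s • x) y = s * polarForm q' x y)
    (haniso' : ∀ x : V', q' x = 0 ↔ x = 0)
    (ε' : V') (hε' : q' ε' = 1)
    (hproper' : ∃ x y : V', polarForm q' x y ≠ 0)
    (hrank' : 3 ≤ Module.rank K' V')
    (γ : V → V') (hbij : Function.Bijective γ)
    (hadd : ∀ x y : V, γ (x + y) = γ x + γ y)
    (hγε : γ ε = ε')
    (hhua : ∀ a : V, a ≠ 0 → ∀ x : V, γ (huaMap q ε a x) = huaMap q' ε' (γ a) (γ x)) :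
    ∃ φ : K ≃+* K', (∀ (s : K) (x : V), γ (s • x) = φ s • γ x) ∧
      ∀ x : V, q' (γ x) = φ (q x) := by
  let Q : QuadraticForm K V :=
    .ofPolar q (fun s x => by rw [hqsmul, pow_two, smul_eq_mul]) hpaddl hpsmull
  let Q' : QuadraticForm K' V' :=
    .ofPolar q' (fun s x => by rw [hqsmul', pow_two, smul_eq_mul]) hpaddl' hpsmull'
  let e : V ≃+ V' := AddEquiv.ofBijective (AddMonoidHom.mk' γ hadd) hbij
  have he : ∀ a x, e (huaMap Q ε a x) = huaMap Q' ε' (e a) (e x) := by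
    intro a x
    rcases eq_or_ne a 0 with rfl | ha
    · simp only [QuadraticMap.huaMap_zero_left, map_zero]
    · exact hhua a ha x
  obtain ⟨φ, hφ⟩ := QuadraticMap.exists_ringEquiv_of_huaMap (Q := Q) (Q' := Q')
    (fun x => (haniso x).mp) hε (fun x => (haniso' x).mp) hε' hproper' hrank' e hγε he
  exact ⟨φ, hφ, QuadraticMap.map_apply_eq_of_huaMap (Q := Q) (Q' := Q') hε hε' φ e hφ hγε
    fun x => he x ε⟩

/-- A Jordan isomorphism between a Moufang set of quadratic form type and a Moufang set of
proper quadratic form type of dimension at least `3` is induced by an isomorphism of the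
quadratic spaces. -/
theorem jordan_iso_quadratic_quadratic {K V K' V' : Type*} [Field K] [AddCommGroup V]
    [Module K V] [Field K'] [AddCommGroup V'] [Module K' V']
    (q : V → K)
    (hqsmul : ∀ (s : K) (x : V), q (s • x) = s ^ 2 * q x)
    (hpaddl : ∀ x x' y : V, polarForm q (x + x') y = polarForm q x y + polarForm q x' y)
    (hpsmull : ∀ (s : K) (x y : V), polarForm q (s • x) y = s * polarForm q x y)
    (hpaddr : ∀ x y y' : V, polarForm q x (y + y') = polarForm q x y + polarForm q x y')
    (hpsmulr : ∀ (s : K) (x y : V), polarForm q x (s • y) = s * polarForm q x y)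
    (haniso : ∀ x : V, q x = 0 ↔ x = 0)
    (ε : V) (hε : q ε = 1)
    (q' : V' → K')
    (hqsmul' : ∀ (s : K') (x : V'), q' (s • x) = s ^ 2 * q' x)
    (hpaddl' : ∀ x x' y : V', polarForm q' (x + x') y = polarForm q' x y + polarForm q' x' y)
    (hpsmull' : ∀ (s : K') (x y : V'), polarForm q' (s • x) y = s * polarForm q' x y)
    (hpaddr' : ∀ x y y' : V', polarForm q' x (y + y') = polarForm q' x y + polarForm q' x y')
    (hpsmulr' : ∀ (s : K') (x y : V'), polarForm q' x (s • y) = s * polarForm q' x y)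
    (haniso' : ∀ x : V', q' x = 0 ↔ x = 0)
    (ε' : V') (hε' : q' ε' = 1)
    (hproper' : ∃ x y : V', polarForm q' x y ≠ 0)
    (hrank' : 3 ≤ Module.rank K' V')
    (γ : V → V') (hbij : Function.Bijective γ)
    (hadd : ∀ x y : V, γ (x + y) = γ x + γ y)
    (hγε : γ ε = ε')
    (hhua : ∀ a : V, a ≠ 0 → ∀ x : V, γ (huaMap q ε a x) = huaMap q' ε' (γ a) (γ x)) :
    ∃ φ : K ≃+* K', (∀ (s : K) (x : V), γ (s • x) = φ s • γ x) ∧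
      ∀ x : V, q' (γ x) = φ (q x) :=
  jordan_iso_quadratic_quadratic_general q hqsmul hpaddl hpsmull haniso ε hε q' hqsmul' hpaddl'
    hpsmull' haniso' ε' hε' hproper' hrank' γ hbij hadd hγε hhua
end

section
/- Let F₁ and F₂ be fields, let H₁ = ℍ[F₁, a₁, b₁] and H₂ = ℍ[F₂, a₂, b₂] be quaternion algebras, and let φ : H₁ → H₂ be a ring isomorphism that maps the canonical copy of F₁ in H₁ (the range of the algebra map F₁ → H₁) onto the canonical copy of F₂ in H₂. Then φ commutes with the standard conjugations: φ(star x) = star(φ(x)) for every x ∈ H₁. Consequently φ carries trace to trace and norm to norm: φ(x + star x) = φ(x) + star(φ(x)) and φ(x * star x) = φ(x) * star(φ(x)) for all x ∈ H₁. -/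
/-!
Every quaternion `x` satisfies `x² - T(x) x + N(x) = 0` with the trace `T(x) = x + x̄` and the
norm `N(x) = x x̄` scalars. Applying `φ` gives a second such equation for `φ x`, with the
scalars `φ (T x)` and `φ (N x)`. A non-scalar element satisfies at most one monic quadratic
equation over the base field, so `φ (T x) = T (φ x)`, i.e. `φ x̄ = (φ x)‾`. If instead `φ x`
is scalar, so is `x`, and both sides equal `φ x`.
-/

open Quaternion

section QuadraticRelation

variable {F A : Type*} [Field F] [Ring A] [Algebra F A]

theorem eq_of_mul_self_sub_mul_add_eq_zero {y s s' t t' : A}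
    (hy : y ∉ Set.range (algebraMap F A))
    (hs : s ∈ Set.range (algebraMap F A)) (hs' : s' ∈ Set.range (algebraMap F A))
    (ht : t ∈ Set.range (algebraMap F A)) (ht' : t' ∈ Set.range (algebraMap F A))
    (h : y * y - s * y + t = 0) (h' : y * y - s' * y + t' = 0) : s = s' := by
  obtain ⟨σ, rfl⟩ := hs
  obtain ⟨σ', rfl⟩ := hs'
  obtain ⟨τ, rfl⟩ := ht
  obtain ⟨τ', rfl⟩ := ht'
  have hlin : (σ - σ') • y = algebraMap F A (τ - τ') := by
    rw [Algebra.smul_def, map_sub, map_sub, sub_mul]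
    rw [← sub_eq_zero]
    calc _ = (y * y - algebraMap F A σ' * y + algebraMap F A τ')
          - (y * y - algebraMap F A σ * y + algebraMap F A τ) := by abel
      _ = 0 := by rw [h, h', sub_zero]
  by_contra hne
  have hσ : σ - σ' ≠ 0 := sub_ne_zero.mpr fun heq => hne (congrArg _ heq)
  refine hy ⟨(σ - σ')⁻¹ * (τ - τ'), ?_⟩
  rw [map_mul, ← Algebra.smul_def, ← hlin, inv_smul_smul₀ hσ]

end QuadraticRelation

namespace QuaternionAlgebra

variable {R : Type*} [CommRing R] {c₁ c₂ c₃ : R}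

theorem self_add_star_mem_range (x : ℍ[R,c₁,c₂,c₃]) :
    x + star x ∈ Set.range (algebraMap R ℍ[R,c₁,c₂,c₃]) :=
  ⟨_, (self_add_star' x).symm⟩

theorem mul_star_mem_range (x : ℍ[R,c₁,c₂,c₃]) :
    x * star x ∈ Set.range (algebraMap R ℍ[R,c₁,c₂,c₃]) :=
  ⟨_, (mul_star_eq_coe x).symm⟩

theorem mul_self_sub_trace_mul_add_norm (x : ℍ[R,c₁,c₂,c₃]) :
    x * x - (x + star x) * x + x * star x = 0 := by
  rw [← star_comm_self' x]
  noncomm_ring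

theorem star_eq_self_of_mem_range {x : ℍ[R,c₁,c₂,c₃]}
    (hx : x ∈ Set.range (algebraMap R ℍ[R,c₁,c₂,c₃])) : star x = x := by
  obtain ⟨r, rfl⟩ := hx
  exact star_coe r

end QuaternionAlgebra

open QuaternionAlgebra in
/-- A ring isomorphism between quaternion algebras which maps the canonical copy of the
first base field onto the canonical copy of the second commutes with the standard
conjugations, hence carries trace to trace and norm to norm. -/
theorem quaternion_ringEquiv_star_comm {F₁ F₂ : Type*} [Field F₁] [Field F₂]
    (a₁ b₁ : F₁) (a₂ b₂ : F₂)
    (φ : ℍ[F₁, a₁, b₁] ≃+* ℍ[F₂, a₂, b₂])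
    (hφ : ⇑φ '' Set.range (algebraMap F₁ ℍ[F₁, a₁, b₁]) =
      Set.range (algebraMap F₂ ℍ[F₂, a₂, b₂])) :
    (∀ x : ℍ[F₁, a₁, b₁], φ (star x) = star (φ x)) ∧
    (∀ x : ℍ[F₁, a₁, b₁], φ (x + star x) = φ x + star (φ x)) ∧
    (∀ x : ℍ[F₁, a₁, b₁], φ (x * star x) = φ x * star (φ x)) := by
  have map_mem {x} (hx : x ∈ Set.range (algebraMap F₁ ℍ[F₁, a₁, b₁])) :=
    hφ ▸ Set.mem_image_of_mem φ hx
  have key (x : ℍ[F₁, a₁, b₁]) : φ (star x) = star (φ x) := by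
    by_cases hx : φ x ∈ Set.range (algebraMap F₂ ℍ[F₂, a₂, b₂])
    · obtain ⟨x', hx', hφx'⟩ := hφ ▸ hx
      rw [← φ.injective hφx', star_eq_self_of_mem_range hx',
        star_eq_self_of_mem_range (map_mem hx')]
    · have htrace : φ (x + star x) = φ x + star (φ x) :=
        eq_of_mul_self_sub_mul_add_eq_zero hx (map_mem (self_add_star_mem_range x))
          (self_add_star_mem_range _) (map_mem (mul_star_mem_range x)) (mul_star_mem_range _)
          (by simpa using congrArg φ (mul_self_sub_trace_mul_add_norm x))
          (mul_self_sub_trace_mul_add_norm _)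
      exact add_left_cancel ((map_add φ x (star x)).symm.trans htrace)
  exact ⟨key, fun x => by rw [map_add, key], fun x => by rw [map_mul, key]⟩
end

section
/- Let F be a field and a, b ∈ F such that the quaternion algebra H = ℍ[F, a, b] is a division ring (every nonzero element of H is a unit). If x, y ∈ H both lie outside the center of H and x*y = y*x, then y belongs to the F-linear span of {1, x}; equivalently, the quadratic subfields E_x = F·1 + F·x and E_y = F·1 + F·y coincide. -/
/-!
Let `p`, `q` be the pure parts of `x`, `y`. Conjugation reverses products and negates pure
quaternions, so `star (p * q) = q * p`. When `p` and `q` commute, `p * q` is therefore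
self-conjugate, hence a scalar `t` as soon as `2 ≠ 0`; in characteristic `2` the same identity
makes the whole algebra commutative, which a noncentral `x` rules out. Likewise `p * p` is a
scalar `s`, nonzero because `p ≠ 0` is a unit, and `s • q = q * p * p = t • p`.
-/

open Quaternion

namespace QuaternionAlgebra

variable {R : Type*} [CommRing R] {a b : R}

theorem star_im_mul_im (x y : ℍ[R,a,b]) : star (x.im * y.im) = y.im * x.im := by
  simp only [star_mul, star_im, coe_zero, zero_mul, add_zero, neg_mul_neg]

theorem im_mul_im_sub_im_mul_im (x y : ℍ[R,a,b]) :
    x.im * y.im - y.im * x.im = x * y - y * x := by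
  ext <;> simp <;> ring

theorem commute_im_im_iff {x y : ℍ[R,a,b]} : Commute x.im y.im ↔ Commute x y := by
  rw [commute_iff_eq, commute_iff_eq, ← sub_eq_zero, im_mul_im_sub_im_mul_im, sub_eq_zero]

theorem mem_center_of_im_eq_zero {x : ℍ[R,a,b]} (hx : x.im = 0) : x ∈ Set.center ℍ[R,a,b] :=
  Semigroup.mem_center_iff.2 fun _ => commute_im_im_iff.1 (hx ▸ Commute.zero_right _)

theorem star_eq_self_of_two_eq_zero (h2 : (2 : R) = 0) (z : ℍ[R,a,b]) : star z = z := by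
  ext <;> simp <;> linear_combination (-_) * h2

theorem mem_center_of_two_eq_zero (h2 : (2 : R) = 0) (x : ℍ[R,a,b]) :
    x ∈ Set.center ℍ[R,a,b] :=
  Semigroup.mem_center_iff.2 fun y => commute_im_im_iff.1
    ((star_im_mul_im x y).symm.trans (star_eq_self_of_two_eq_zero h2 _))

theorem eq_coe_re_of_star_eq_self [NoZeroDivisors R] (h2 : (2 : R) ≠ 0) {z : ℍ[R,a,b]}
    (hz : star z = z) : z = ↑z.re := by
  have eq_zero_of_neg_eq {r : R} (hr : -r = r) : r = 0 :=
    (mul_eq_zero.1 (by linear_combination -hr : 2 * r = 0)).resolve_left h2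
  obtain ⟨-, hI, hJ, hK⟩ := QuaternionAlgebra.ext_iff.1 hz
  ext
  · rfl
  · exact eq_zero_of_neg_eq hI
  · exact eq_zero_of_neg_eq hJ
  · exact eq_zero_of_neg_eq hK

theorem im_mul_im_eq_coe_re [NoZeroDivisors R] (h2 : (2 : R) ≠ 0) {x y : ℍ[R,a,b]}
    (h : Commute x y) : x.im * y.im = ↑(x.im * y.im).re :=
  eq_coe_re_of_star_eq_self h2 ((star_im_mul_im x y).trans (commute_im_im_iff.2 h).symm.eq)

theorem mem_span_one_of_im_eq_smul {x y : ℍ[R,a,b]} {c : R} (h : y.im = c • x.im) :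
    y ∈ Submodule.span R {1, x} := by
  refine Submodule.mem_span_pair.2 ⟨y.re - c * x.re, c, ?_⟩
  rw [← re_add_im y, h, ← sub_re_self x]
  ext <;> simp

end QuaternionAlgebra

theorem eq_smul_of_mul_self_eq_algebraMap {F A : Type*} [Field F] [Ring A] [Algebra F A]
    {p q : A} {s t : F} (hs : s ≠ 0) (hp : p * p = algebraMap F A s)
    (hq : q * p = algebraMap F A t) : q = (t / s) • p := by
  have h : s • q = t • p := calc
    s • q = q * (p * p) := by rw [hp, Algebra.smul_def, Algebra.commutes]
    _ = t • p := by rw [← mul_assoc, hq, Algebra.smul_def]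
  rw [div_eq_inv_mul, mul_smul, ← h, inv_smul_smul₀ hs]

theorem quaternion_commuting_noncentral_span_general {F : Type*} [Field F] (a b : F)
    (hdiv : ∀ z : ℍ[F, a, b], z ≠ 0 → IsUnit z)
    (x y : ℍ[F, a, b])
    (hx : x ∉ Set.center ℍ[F, a, b])
    (hxy : x * y = y * x) :
    y ∈ Submodule.span F ({1, x} : Set ℍ[F, a, b]) := by
  have h2 : (2 : F) ≠ 0 := fun h2 => hx (QuaternionAlgebra.mem_center_of_two_eq_zero h2 x)
  have hp : x.im ≠ 0 := fun h => hx (QuaternionAlgebra.mem_center_of_im_eq_zero h)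
  have hxx := QuaternionAlgebra.im_mul_im_eq_coe_re h2 (Commute.refl x)
  have hyx := QuaternionAlgebra.im_mul_im_eq_coe_re h2 hxy.symm
  have hs : (x.im * x.im).re ≠ 0 := fun hs =>
    hp ((hdiv _ hp).mul_left_eq_zero.1 (by rw [hxx, hs, QuaternionAlgebra.coe_zero]))
  rw [← QuaternionAlgebra.coe_algebraMap] at hxx hyx
  exact QuaternionAlgebra.mem_span_one_of_im_eq_smul
    (eq_smul_of_mul_self_eq_algebraMap hs hxx hyx)

/-- In a quaternion division algebra, two commuting noncentral elements generate the same
quadratic subfield: if `x * y = y * x` with `x, y` noncentral, then `y` lies in the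
`F`-linear span of `{1, x}`. -/
theorem quaternion_commuting_noncentral_span {F : Type*} [Field F] (a b : F)
    (hdiv : ∀ z : ℍ[F, a, b], z ≠ 0 → IsUnit z)
    (x y : ℍ[F, a, b])
    (hx : x ∉ Set.center ℍ[F, a, b])
    (hy : y ∉ Set.center ℍ[F, a, b])
    (hxy : x * y = y * x) :
    y ∈ Submodule.span F ({1, x} : Set ℍ[F, a, b]) :=
  quaternion_commuting_noncentral_span_general a b hdiv x y hx hxy
end

section
/- Let D be a division ring and F a subfield of D contained in the center of D. Let x ∈ D with x ∉ F·1 and x² ∈ F·1 + F·x (so that E := F·1 + F·x is a two-dimensional commutative division subring of D), and let y ∈ D with y ∉ E. Then the four elements 1, x, y, x*y are linearly independent over F. -/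
/-!
Since `x² ∈ F·1 + F·x`, the span `E = F·1 + F·x` is a finite-dimensional subalgebra of `D`, hence
closed under inverses. Given a relation `a + b x + c y + d x y = 0`, the element `e = c + d x` of
`E` satisfies `e y = -(a + b x) ∈ E`, so `e ≠ 0` would force `y = e⁻¹ (e y) ∈ E`. Hence `e = 0`,
and the independence of `1, x` kills all four coefficients.
-/

open Submodule

section QuadraticSpan

variable {F D : Type*}

theorem span_one_pair_mul_mem [CommSemiring F] [Semiring D] [Algebra F D] {x a b : D}
    (hx2 : x ^ 2 ∈ span F ({1, x} : Set D)) (ha : a ∈ span F ({1, x} : Set D))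
    (hb : b ∈ span F ({1, x} : Set D)) : a * b ∈ span F ({1, x} : Set D) := by
  have hle : span F ({1, x} : Set D) * span F {1, x} ≤ span F {1, x} := by
    rw [span_mul_span, span_le]
    rintro _ ⟨u, hu, v, hv, rfl⟩
    rcases hu with rfl | rfl <;> rcases hv with rfl | rfl
    · simpa using subset_span (by simp)
    · simpa using subset_span (by simp)
    · simpa using subset_span (by simp)
    · simpa [sq] using hx2
  exact hle (mul_mem_mul ha hb)

def spanOnePairSubalgebra [CommSemiring F] [Semiring D] [Algebra F D] (x : D)
    (hx2 : x ^ 2 ∈ span F ({1, x} : Set D)) : Subalgebra F D :=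
  (span F ({1, x} : Set D)).toSubalgebra (subset_span (by simp))
    fun _ _ ha hb ↦ span_one_pair_mul_mem hx2 ha hb

theorem span_one_pair_inv_mem [Field F] [DivisionRing D] [Algebra F D] {x e : D}
    (hx2 : x ^ 2 ∈ span F ({1, x} : Set D)) (he : e ∈ span F ({1, x} : Set D)) :
    e⁻¹ ∈ span F ({1, x} : Set D) :=
  (IsIntegral.of_mem_of_fg (spanOnePairSubalgebra x hx2)
    (fg_span (Set.toFinite _)) e he).inv_mem (A := spanOnePairSubalgebra x hx2) he

theorem eq_zero_of_mul_mem_span_one_pair [Field F] [DivisionRing D] [Algebra F D] {x e y : D}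
    (hx2 : x ^ 2 ∈ span F ({1, x} : Set D)) (he : e ∈ span F ({1, x} : Set D))
    (hey : e * y ∈ span F ({1, x} : Set D)) (hy : y ∉ span F ({1, x} : Set D)) : e = 0 := by
  by_contra he0
  apply hy
  rw [← inv_mul_cancel_left₀ he0 y]
  exact span_one_pair_mul_mem hx2 (span_one_pair_inv_mem hx2 he) hey

end QuadraticSpan

/-- Let `D` be a division ring which is an algebra over a field `F` (i.e. `F` is a
central subfield of `D`). If `x ∉ F·1` satisfies `x² ∈ F·1 + F·x` and `y ∉ F·1 + F·x`,
then `1, x, y, x*y` are linearly independent over `F`. -/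
theorem linearIndependent_one_x_y_xy {F D : Type*} [Field F] [DivisionRing D]
    [Algebra F D] (x : D)
    (hx : x ∉ Submodule.span F ({1} : Set D))
    (hx2 : x ^ 2 ∈ Submodule.span F ({1, x} : Set D))
    (y : D) (hy : y ∉ Submodule.span F ({1, x} : Set D)) :
    LinearIndependent F ![(1 : D), x, y, x * y] := by
  have hpair : LinearIndependent F ![(1 : D), x] :=
    (LinearIndependent.pair_iff' one_ne_zero).mpr fun a ha ↦ hx (mem_span_singleton.mpr ⟨a, ha⟩)
  rw [Fintype.linearIndependent_iff]
  intro g hg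
  simp only [Fin.sum_univ_four, Matrix.cons_val_zero, Matrix.cons_val_one, Matrix.cons_val_two,
    Matrix.cons_val_three, Matrix.head_cons, Matrix.tail_cons] at hg
  have hyx : (g 2 • (1 : D) + g 3 • x) * y = -(g 0 • 1 + g 1 • x) := by
    rw [add_mul, smul_mul_assoc, smul_mul_assoc, one_mul]
    linear_combination (norm := module) hg
  have h23 : g 2 • (1 : D) + g 3 • x = 0 :=
    eq_zero_of_mul_mem_span_one_pair hx2 (mem_span_pair.mpr ⟨_, _, rfl⟩)
      (hyx ▸ neg_mem (mem_span_pair.mpr ⟨_, _, rfl⟩)) hy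
  obtain ⟨h2, h3⟩ := LinearIndependent.pair_iff.mp hpair _ _ h23
  obtain ⟨h0, h1⟩ := LinearIndependent.pair_iff.mp hpair (g 0) (g 1) (by simpa [h2, h3] using hg)
  intro i
  fin_cases i <;> assumption
end
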